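/- arXiv:1910.14337 — 10 statements merged into one kernel-verified Lean document; each statement's English description precedes it below -/
import Mathlib

section
/- Let n = sm with m odd. Let f be an APN permutation of F_{2^s} and let g be a polynomial with all coefficients in F_{2^s} that is an APN permutation of F_{2^n}. Then the piecewise function F defined by F(x) = f(x) for x ∈ F_{2^s} and F(x) = g(x) for x ∉ F_{2^s} is a differentially 4-uniform permutation of F_{2^n}. -/
noncomputable def delta {F : Type*} [Field F] (f : F → F) (a b : F) : ℕ :=
  Nat.card {x : F // f (x + a) + f x = b}

noncomputable def diffUnif {F : Type*} [Field F] (f : F → F) : ℕ :=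
  sSup {d : ℕ | ∃ a b : F, a ≠ 0 ∧ delta f a b = d}

noncomputable def deltaOn {F : Type*} [Field F] (S : Set F) (f : F → F) (a b : F) : ℕ :=
  Nat.card {x : F // x ∈ S ∧ f (x + a) + f x = b}

noncomputable def diffUnifOn {F : Type*} [Field F] (S : Set F) (f : F → F) : ℕ :=
  sSup {d : ℕ | ∃ a ∈ S, a ≠ 0 ∧ ∃ b ∈ S, deltaOn S f a b = d}

lemma delta_eq_ncard {F : Type*} [Field F] (f : F → F) (a b : F) :
    delta f a b = ({x : F | f (x + a) + f x = b} : Set F).ncard := by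
  rw [delta, ← Nat.card_coe_set_eq]; rfl

lemma deltaOn_eq_ncard {F : Type*} [Field F] (S : Set F) (f : F → F) (a b : F) :
    deltaOn S f a b = ({x : F | x ∈ S ∧ f (x + a) + f x = b} : Set F).ncard := by
  rw [deltaOn, ← Nat.card_coe_set_eq]; rfl

lemma delta_le_of_diffUnif {F : Type*} [Field F] [Fintype F] (g : F → F) (d : ℕ)
    (h : diffUnif g = d) {a : F} (ha : a ≠ 0) (b : F) : delta g a b ≤ d := by
  have hbdd : BddAbove {d : ℕ | ∃ a b : F, a ≠ 0 ∧ delta g a b = d} := by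
    refine ⟨Nat.card F, ?_⟩
    rintro e ⟨a, b, -, rfl⟩
    exact Nat.card_le_card_of_injective (Subtype.val) Subtype.val_injective
  have := le_csSup hbdd (show delta g a b ∈ _ from ⟨a, b, ha, rfl⟩)
  rwa [← diffUnif, h] at this

lemma deltaOn_le_of_diffUnifOn {F : Type*} [Field F] [Fintype F] (S : Set F) (f : F → F) (d : ℕ)
    (h : diffUnifOn S f = d) {a b : F} (haS : a ∈ S) (ha : a ≠ 0) (hb : b ∈ S) :
    deltaOn S f a b ≤ d := by
  have hbdd : BddAbove {d : ℕ | ∃ a ∈ S, a ≠ 0 ∧ ∃ b ∈ S, deltaOn S f a b = d} := by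
    refine ⟨Nat.card F, ?_⟩
    rintro e ⟨a, -, -, b, -, rfl⟩
    exact Nat.card_le_card_of_injective (Subtype.val) Subtype.val_injective
  have := le_csSup hbdd (show deltaOn S f a b ∈ _ from ⟨a, haS, ha, b, hb, rfl⟩)
  rwa [← diffUnifOn, h] at this

/-- Let `n = s·m` with `m` odd, `F` the field with `2^n` elements and
`S = F_{2^s}` its subfield with `2^s` elements. If `f` is an APN permutation of `S` and
`g` is induced by a polynomial with coefficients in `S` which is an APN permutation of `F`,
then the piecewise function `Fn` (equal to `f` on `S` and to `g` off `S`) is a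
differentially 4-uniform permutation of `F`. -/
theorem stmt0 {F : Type*} [Field F] [Fintype F] (n s m : ℕ)
    (hn : n = s * m) (hm : Odd m) (hcard : Fintype.card F = 2 ^ n)
    (S : Set F) (hS : S = {x : F | x ^ (2 ^ s) = x})
    (f : F → F) (hfperm : Set.BijOn f S S) (hfAPN : diffUnifOn S f = 2)
    (g : F → F) (p : Polynomial F) (hp : ∀ i, p.coeff i ∈ S)
    (hgp : ∀ x, g x = p.eval x)
    (hgperm : Function.Bijective g) (hgAPN : diffUnif g = 2)
    (Fn : F → F)
    (hFn1 : ∀ x ∈ S, Fn x = f x) (hFn2 : ∀ x ∉ S, Fn x = g x) :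
    Function.Bijective Fn ∧ ∀ a b : F, a ≠ 0 → delta Fn a b ≤ 4 := by
  -- characteristic 2
  haveI hchar : CharP F 2 := by
    haveI := ringChar.charP F
    obtain ⟨k, hk, hc⟩ := FiniteField.card F (ringChar F)
    have hdvd : ringChar F ∣ Fintype.card F := by
      rw [hc]; exact dvd_pow_self _ (by positivity)
    rw [hcard] at hdvd
    have h2 : ringChar F = 2 :=
      (Nat.prime_dvd_prime_iff_eq hk Nat.prime_two).mp (hk.dvd_of_dvd_pow hdvd)
    exact h2 ▸ ‹CharP F (ringChar F)›
  haveI : Fact (Nat.Prime 2) := ⟨Nat.prime_two⟩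
  have hself : ∀ x : F, x + x = 0 := fun x => CharTwo.add_self_eq_zero x
  -- the Frobenius σ : x ↦ x^(2^s) as a ring hom
  set σ : F →+* F :=
    { toFun := fun x => x ^ 2 ^ s
      map_one' := one_pow _
      map_mul' := fun x y => mul_pow x y _
      map_zero' := zero_pow (by positivity)
      map_add' := fun x y => add_pow_char_pow x y 2 s } with hσdef
  have hσ : ∀ x : F, σ x = x ^ 2 ^ s := fun x => rfl
  have hmemS : ∀ x : F, x ∈ S ↔ σ x = x := by
    intro x; rw [hS, hσ]; rfl
  -- S is closed under addition
  have haddS : ∀ x ∈ S, ∀ y ∈ S, x + y ∈ S := by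
    intro x hx y hy
    rw [hmemS] at *
    rw [map_add, hx, hy]
  -- g commutes with σ
  have hgσ : ∀ x : F, σ (g x) = g (σ x) := by
    intro x
    have hmap : p.map σ = p := by
      ext i
      rw [Polynomial.coeff_map]
      exact (hmemS _).mp (hp i)
    rw [hgp, hgp, ← Polynomial.eval₂_at_apply σ x, ← Polynomial.eval_map, hmap]
  -- g maps S into S and reflects S
  have hgS : ∀ x ∈ S, g x ∈ S := by
    intro x hx
    rw [hmemS] at *
    rw [hgσ, hx]
  have hgS' : ∀ x : F, g x ∈ S → x ∈ S := by
    intro x hx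
    haveI : Finite ↥S := Set.Finite.to_subtype (Set.toFinite S)
    set g' : S → S := fun y => ⟨g y, hgS y y.2⟩ with hg'
    have hinj : Function.Injective g' := by
      intro u v huv
      exact Subtype.ext (hgperm.1 (congrArg Subtype.val huv))
    obtain ⟨y, hy⟩ := (Finite.injective_iff_surjective.mp hinj) ⟨g x, hx⟩
    have : g y.1 = g x := congrArg Subtype.val hy
    have := hgperm.1 this
    rw [← this]; exact y.2
  -- f maps S into S
  have hfS : ∀ x ∈ S, f x ∈ S := fun x hx => hfperm.1 hx
  -- x ∉ S, a ∈ S → x + a ∉ S  etc.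
  have hout : ∀ x a : F, x + a ∈ S → a ∈ S → x ∈ S := by
    intro x a h1 h2
    have : x + a + a ∈ S := haddS _ h1 _ h2
    rwa [add_assoc, hself, add_zero] at this
  -- Bijectivity of Fn
  have hFninj : Function.Injective Fn := by
    intro x y hxy
    by_cases hx : x ∈ S <;> by_cases hy : y ∈ S
    · rw [hFn1 x hx, hFn1 y hy] at hxy
      exact hfperm.2.1 hx hy hxy
    · rw [hFn1 x hx, hFn2 y hy] at hxy
      exact absurd (hgS' y (hxy ▸ hfS x hx)) hy
    · rw [hFn2 x hx, hFn1 y hy] at hxy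
      exact absurd (hgS' x (hxy.symm ▸ hfS y hy)) hx
    · rw [hFn2 x hx, hFn2 y hy] at hxy
      exact hgperm.1 hxy
  refine ⟨Finite.injective_iff_bijective.mp hFninj, ?_⟩
  -- differential uniformity
  intro a b ha
  set T : Set F := {x : F | Fn (x + a) + Fn x = b} with hT
  have hTfin : T.Finite := Set.toFinite T
  have hTa : ∀ x ∈ T, x + a ∈ T := by
    intro x hx
    simp only [hT, Set.mem_setOf_eq] at *
    rw [add_assoc, hself, add_zero, add_comm]
    exact hx
  rw [delta_eq_ncard]
  by_cases haS : a ∈ S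
  · -- case a ∈ S
    have hsub : T ⊆ (T ∩ S) ∪ (T \ S) := fun x hx => by
      by_cases h : x ∈ S
      · exact Or.inl ⟨hx, h⟩
      · exact Or.inr ⟨hx, h⟩
    have h1 : (T ∩ S).ncard ≤ 2 := by
      by_cases hb : b ∈ S
      · have hsub2 : T ∩ S ⊆ {x : F | x ∈ S ∧ f (x + a) + f x = b} := by
          rintro x ⟨hxT, hxS⟩
          have hxa : x + a ∈ S := haddS _ hxS _ haS
          refine ⟨hxS, ?_⟩
          rw [← hFn1 _ hxa, ← hFn1 _ hxS]
          exact hxT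
        calc (T ∩ S).ncard ≤ _ := Set.ncard_le_ncard hsub2 (Set.toFinite _)
          _ = deltaOn S f a b := (deltaOn_eq_ncard S f a b).symm
          _ ≤ 2 := deltaOn_le_of_diffUnifOn S f 2 hfAPN haS ha hb
      · have : T ∩ S = ∅ := by
          ext x
          simp only [Set.mem_inter_iff, Set.mem_empty_iff_false, iff_false]
          rintro ⟨hxT, hxS⟩
          have hxa : x + a ∈ S := haddS _ hxS _ haS
          have : f (x + a) + f x = b := by
            rw [← hFn1 _ hxa, ← hFn1 _ hxS]; exact hxT
          exact hb (this ▸ haddS _ (hfS _ hxa) _ (hfS _ hxS))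
        rw [this]; simp
    have h2 : (T \ S).ncard ≤ 2 := by
      have hsub2 : T \ S ⊆ {x : F | g (x + a) + g x = b} := by
        rintro x ⟨hxT, hxS⟩
        have hxa : x + a ∉ S := fun h => hxS (hout x a h haS)
        show g (x + a) + g x = b
        rw [← hFn2 _ hxa, ← hFn2 _ hxS]
        exact hxT
      calc (T \ S).ncard ≤ _ := Set.ncard_le_ncard hsub2 (Set.toFinite _)
        _ = delta g a b := (delta_eq_ncard g a b).symm
        _ ≤ 2 := delta_le_of_diffUnif g 2 hgAPN ha b
    calc T.ncard ≤ ((T ∩ S) ∪ (T \ S)).ncard := Set.ncard_le_ncard hsub (Set.toFinite _)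
      _ ≤ (T ∩ S).ncard + (T \ S).ncard := Set.ncard_union_le _ _
      _ ≤ 4 := by omega
  · -- case a ∉ S
    set c : F := a + σ a with hc
    set d : F := b + σ b with hd
    have hcne : c ≠ 0 := by
      intro h
      apply haS
      rw [hmemS]
      linear_combination h - hself a
    have hcS : c ∉ S := by
      intro hcm
      apply haS
      rw [hmemS]
      -- from c ∈ S we get σ (σ a) = a
      have hcm' : σ a + σ (σ a) = a + σ a := by
        have := (hmemS c).mp hcm
        rw [hc, map_add] at this
        exact this
      have hσσ : σ (σ a) = a := by linear_combination hcm'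
      -- iterates of σ
      have hiter : ∀ (k : ℕ) (x : F), σ^[k] x = x ^ (2 ^ s) ^ k := by
        intro k
        induction k with
        | zero => intro x; simp
        | succ k ih =>
          intro x
          rw [Function.iterate_succ_apply', ih, hσ, ← pow_mul, pow_succ]
      have hσm : ∀ x : F, σ^[m] x = x := by
        intro x
        rw [hiter, ← pow_mul, ← hn, ← hcard, FiniteField.pow_card]
      have heven : ∀ r : ℕ, σ^[2 * r] a = a := by
        intro r
        induction r with
        | zero => simp
        | succ r ih =>
          have h2 : (⇑σ)^[2] a = a := by
            rw [Function.iterate_succ_apply', Function.iterate_one]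
            exact hσσ
          rw [show 2 * (r + 1) = 2 * r + 2 from by ring, Function.iterate_add_apply, h2, ih]
      obtain ⟨t, ht⟩ := hm
      have hma : σ^[m + 1] a = a := by
        have : m + 1 = 2 * (t + 1) := by omega
        rw [this]; exact heven (t + 1)
      have : σ^[m + 1] a = σ a := by
        rw [Function.iterate_succ_apply', hσm]
      rw [← this, hma]
    -- the auxiliary differential set for g
    set Z : Set F := {w : F | g (w + c) + g w = d} with hZ
    have hZcard : Z.ncard ≤ 2 := by
      rw [← delta_eq_ncard]
      exact delta_le_of_diffUnif g 2 hgAPN hcne d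
    have hZc : ∀ w ∈ Z, w + c ∈ Z := by
      intro w hw
      simp only [hZ, Set.mem_setOf_eq] at *
      rw [add_assoc, hself, add_zero, add_comm]
      exact hw
    -- key: every solution in S pushes into Z
    have key : ∀ x ∈ T, x ∈ S → x + a ∈ Z := by
      intro x hxT hxS
      have hxa : x + a ∉ S := by
        intro h
        apply haS
        have h2 := haddS x hxS (x + a) h
        rwa [show x + (x + a) = a from by linear_combination hself x] at h2
      have h1 : g (x + a) + f x = b := by
        rw [← hFn2 _ hxa, ← hFn1 _ hxS]; exact hxT
      have h2 : g (x + σ a) + f x = σ b := by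
        have h3 := congrArg σ h1
        rw [map_add, hgσ, map_add, (hmemS x).mp hxS, (hmemS (f x)).mp (hfS x hxS)] at h3
        exact h3
      show g ((x + a) + c) + g (x + a) = d
      rw [show (x + a) + c = x + σ a from by rw [hc]; linear_combination hself a, hd]
      linear_combination h1 + h2 - hself (f x)
    -- the three pieces
    have hA1 : (T ∩ S).ncard ≤ 1 := by
      rw [Set.ncard_le_one (Set.toFinite _)]
      intro x hx x' hx'
      by_contra hne
      have hz1 := key x hx.1 hx.2
      have hz2 := key x' hx'.1 hx'.2
      have hz3 : x + a + c ∈ Z := hZc _ hz1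
      have d12 : x + a ≠ x' + a := fun h => hne (by linear_combination h)
      have d13 : x + a ≠ x + a + c := fun h => hcne (by linear_combination -h)
      have d23 : x' + a ≠ x + a + c := by
        intro h
        apply hcS
        rw [show c = x + x' from by linear_combination -h - hself x]
        exact haddS x hx.2 x' hx'.2
      have hsub3 : ({x + a, x' + a, x + a + c} : Set F) ⊆ Z := by
        rintro y (rfl | rfl | rfl)
        exacts [hz1, hz2, hz3]
      have h3 : ({x + a, x' + a, x + a + c} : Set F).ncard = 3 := by
        rw [Set.ncard_insert_of_notMem (by simp [d12, d13]) (Set.toFinite _),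
          Set.ncard_insert_of_notMem (by simp [d23]) (Set.toFinite _), Set.ncard_singleton]
      have := Set.ncard_le_ncard hsub3 (Set.toFinite _)
      omega
    set B : Set F := {x : F | x ∈ T ∧ x ∉ S ∧ x + a ∈ S} with hB
    have hB1 : B.ncard ≤ 1 := by
      have hsub2 : B ⊆ (· + a) '' (T ∩ S) := by
        rintro y ⟨hyT, hyS, hyaS⟩
        refine ⟨y + a, ⟨hTa y hyT, hyaS⟩, ?_⟩
        show (y + a) + a = y
        linear_combination hself a
      calc B.ncard ≤ ((· + a) '' (T ∩ S)).ncard := Set.ncard_le_ncard hsub2 (Set.toFinite _)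
        _ = (T ∩ S).ncard := Set.ncard_image_of_injective _ (add_left_injective a)
        _ ≤ 1 := hA1
    set C : Set F := {x : F | x ∈ T ∧ x ∉ S ∧ x + a ∉ S} with hC
    have hC2 : C.ncard ≤ 2 := by
      have hsub2 : C ⊆ {x : F | g (x + a) + g x = b} := by
        rintro x ⟨hxT, hxS, hxaS⟩
        show g (x + a) + g x = b
        rw [← hFn2 _ hxaS, ← hFn2 _ hxS]
        exact hxT
      calc C.ncard ≤ _ := Set.ncard_le_ncard hsub2 (Set.toFinite _)
        _ = delta g a b := (delta_eq_ncard g a b).symm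
        _ ≤ 2 := delta_le_of_diffUnif g 2 hgAPN ha b
    have hcover : T ⊆ ((T ∩ S) ∪ B) ∪ C := by
      intro x hx
      by_cases h1 : x ∈ S
      · exact Or.inl (Or.inl ⟨hx, h1⟩)
      by_cases h2 : x + a ∈ S
      · exact Or.inl (Or.inr ⟨hx, h1, h2⟩)
      · exact Or.inr ⟨hx, h1, h2⟩
    calc T.ncard ≤ (((T ∩ S) ∪ B) ∪ C).ncard := Set.ncard_le_ncard hcover (Set.toFinite _)
      _ ≤ ((T ∩ S) ∪ B).ncard + C.ncard := Set.ncard_union_le _ _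
      _ ≤ ((T ∩ S).ncard + B.ncard) + C.ncard := by
          have := Set.ncard_union_le (T ∩ S) B
          omega
      _ ≤ 4 := by omega
end

section
/- Let n = sm with s even and m odd, and let k be an integer with gcd(k,n)=2. Then for every b ∈ F_{2^s}, the equation x^{2^k}+x = b has no solution x ∈ F_{2^n} \ F_{2^s}. -/
private lemma iter_fix {F : Type*} [Monoid F] (a : F) (d : ℕ) (h : a ^ (2^d) = a) :
    ∀ t, a ^ (2^(d*t)) = a := by
  intro t
  induction t with
  | zero => simp
  | succ t ih =>
      have hdt : d * (t+1) = d * t + d := by ring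
      rw [hdt, pow_add, pow_mul, ih, h]

private lemma pow_pow_comm {F : Type*} [Monoid F] (a : F) (i j : ℕ) :
    (a ^ (2^i)) ^ (2^j) = (a ^ (2^j)) ^ (2^i) := by
  rw [← pow_mul, ← pow_mul, mul_comm]

/-- Let `n = s·m` with `s` even and `m` odd, and let `gcd(k, n) = 2`.
In the field `F` with `2^n` elements (with subfield `F_{2^s} = {x | x^(2^s) = x}`),
for every `b ∈ F_{2^s}` the equation `x^(2^k) + x = b` has no solution
`x ∈ F \ F_{2^s}`. -/
theorem stmt2 {F : Type*} [Field F] [Fintype F] (n s m k : ℕ)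
    (hn : n = s * m) (hs : Even s) (hm : Odd m) (hk : Nat.gcd k n = 2)
    (hcard : Fintype.card F = 2 ^ n) :
    ∀ b x : F, b ^ (2 ^ s) = b → ¬ (x ^ (2 ^ s) = x) → x ^ (2 ^ k) + x ≠ b := by
  intro b x hb hx heq
  rcases Nat.eq_zero_or_pos s with hs0 | hspos
  · exact hx (by simp [hs0])
  have hs2 : 2 ∣ s := hs.two_dvd
  have hm1 : 1 ≤ m := hm.pos
  have hnpos : 0 < n := by rw [hn]; exact Nat.mul_pos hspos hm1
  -- characteristic 2
  haveI hCr : CharP F (ringChar F) := ringChar.charP F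
  have hchar2 : ringChar F = 2 := by
    have h0 : ((2 ^ n : ℕ) : F) = 0 := by
      rw [← hcard]; exact FiniteField.cast_card_eq_zero F
    have hdvd : (ringChar F) ∣ 2 ^ n := (CharP.cast_eq_zero_iff F (ringChar F) _).mp h0
    have hp : (ringChar F).Prime := CharP.char_is_prime F (ringChar F)
    have h2 := hp.dvd_of_dvd_pow hdvd
    exact (Nat.prime_dvd_prime_iff_eq hp Nat.prime_two).mp h2
  haveI hC : CharP F 2 := by rw [← hchar2]; exact ringChar.charP F
  haveI : Fact (Nat.Prime 2) := ⟨Nat.prime_two⟩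
  have hfixn : ∀ a : F, a ^ (2^n) = a := by
    intro a; rw [← hcard]; exact FiniteField.pow_card a
  have hadd : ∀ (u v : F) (j : ℕ), (u + v) ^ (2^j) = u ^ (2^j) + v ^ (2^j) := by
    intro u v j; exact add_pow_char_pow u v 2 j
  have hself : ∀ u : F, u + u = 0 := fun u => CharTwo.add_self_eq_zero u
  set y : F := x ^ (2^s) + x with hy
  have hxk : x ^ (2^k) = b + x := by
    have h1 : x ^ (2^k) + x + x = b + x := by rw [heq]
    rwa [add_assoc, hself, add_zero] at h1
  -- Step A : y^(2^k) = y
  have hAy : y ^ (2^k) = y := by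
    have h1 : y ^ (2^k) = (x ^ (2^k)) ^ (2^s) + x ^ (2^k) := by
      rw [hy, hadd, pow_pow_comm]
    rw [h1, hxk, hadd, hb, hy]
    have : b + x ^ (2^s) + (b + x) = b + b + (x ^ (2^s) + x) := by ring
    rw [this, hself, zero_add]
  have hBy : y ^ (2^n) = y := hfixn y
  -- Step C : y ^ (2^2) = y
  have hCy : y ^ (2^2) = y := by
    rcases Nat.eq_zero_or_pos k with hk0 | hkpos
    · have hn2 : n = 2 := by simpa [hk0] using hk
      exact hn2 ▸ hBy
    · have hk2 : 2 ∣ k := hk ▸ Nat.gcd_dvd_left k n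
      have hk2' : 2 ≤ k := Nat.le_of_dvd hkpos hk2
      obtain ⟨u, v, huv⟩ : ∃ u v : ℕ, k * u = 2 + n * v := by
        have hbez := Nat.gcd_eq_gcd_ab k n
        rw [hk] at hbez
        set a := Nat.gcdA k n with ha
        set c := Nat.gcdB k n with hc
        have hn0 : (0:ℤ) < (n:ℤ) := by exact_mod_cast hnpos
        set u' : ℤ := a % n + n with hu'
        have hmod : (0:ℤ) ≤ a % n := Int.emod_nonneg a (by omega)
        have hu'pos : (1:ℤ) ≤ u' := by omega
        have hdvd : (n:ℤ) ∣ ((k:ℤ) * u' - 2) := by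
          have hde := Int.mul_ediv_add_emod a (n:ℤ)
          refine ⟨(k:ℤ) * (1 - a / n) - c, ?_⟩
          have : (2:ℤ) = k * a + n * c := hbez
          nlinarith [hde]
        obtain ⟨w, hw⟩ := hdvd
        have hku : (2:ℤ) ≤ (k:ℤ) * u' := by
          have : (2:ℤ) ≤ (k:ℤ) := by exact_mod_cast hk2'
          nlinarith
        have hwnn : 0 ≤ w := by nlinarith
        refine ⟨u'.toNat, w.toNat, ?_⟩
        have h1 : (u'.toNat : ℤ) = u' := Int.toNat_of_nonneg (by omega)
        have h2 : (w.toNat : ℤ) = w := Int.toNat_of_nonneg hwnn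
        have : ((k * u'.toNat : ℕ) : ℤ) = ((2 + n * w.toNat : ℕ) : ℤ) := by
          push_cast
          rw [h1, h2]
          omega
        exact_mod_cast this
      symm
      calc y = y ^ (2^(k*u)) := (iter_fix y k hAy u).symm
        _ = (y ^ (2^(n*v))) ^ (2^2) := by rw [huv, add_comm, pow_add, pow_mul]
        _ = y ^ (2^2) := by rw [iter_fix y n hBy v]
  -- Step D : y ^ (2^s) = y
  have hDy : y ^ (2^s) = y := by
    obtain ⟨t, ht⟩ := hs2
    rw [ht]; exact iter_fix y 2 hCy t
  have hxs : x ^ (2^s) = x + y := by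
    rw [hy, add_comm (x ^ (2^s)) x, ← add_assoc, hself, zero_add]
  -- Step E : iteration formula
  have hE : ∀ j : ℕ, x ^ (2^(s*j)) = x + (j : F) * y := by
    intro j
    induction j with
    | zero => simp
    | succ j ih =>
        have hsplit : s * (j+1) = s * j + s := by ring
        have hcast : ((j:F)) ^ (2^s) = (j : F) := by
          rcases Nat.even_or_odd j with hj | hj
          · obtain ⟨t, ht⟩ := hj
            have hj0 : (j : F) = 0 :=
              (CharP.cast_eq_zero_iff F 2 j).mpr ⟨t, by omega⟩
            rw [hj0]; exact zero_pow (by positivity)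
          · obtain ⟨t, ht⟩ := hj
            have hj1 : (j : F) = 1 := by
              rw [ht]; push_cast; rw [show ((2:F)) = 0 from by exact_mod_cast CharP.cast_eq_zero F 2]; ring
            rw [hj1, one_pow]
        calc x ^ (2^(s*(j+1))) = (x ^ (2^(s*j))) ^ (2^s) := by
              rw [hsplit, pow_add, pow_mul]
          _ = (x + (j:F) * y) ^ (2^s) := by rw [ih]
          _ = x ^ (2^s) + ((j:F) * y) ^ (2^s) := hadd _ _ s
          _ = x ^ (2^s) + (j:F) * y := by rw [mul_pow, hcast, hDy]
          _ = x + y + (j:F) * y := by rw [hxs]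
          _ = x + ((j:F) + 1) * y := by ring
          _ = x + ((j+1 : ℕ) : F) * y := by push_cast; ring
  -- conclude
  have hfin : x = x + (m : F) * y := by
    have h3 := hE m
    rw [← hn] at h3
    rw [← h3, hfixn x]
  have hm2 : (m : F) = 1 := by
    obtain ⟨t, ht⟩ := hm
    rw [ht]; push_cast; rw [show ((2:F)) = 0 from by exact_mod_cast CharP.cast_eq_zero F 2]; ring
  rw [hm2, one_mul] at hfin
  have hy0 : y = 0 := left_eq_add.mp hfin
  apply hx
  rw [hxs, hy0, add_zero]
end

section
/- Let n = 4k = sm with k and m odd. Then for every b ∈ F_{2^s}, the equation x^{2^{2k}+2^k} + x^{2^{2k}+1} + x^{2^k+1} + x^{2^{2k}} + x^{2^k} + x = b has no solution x ∈ F_{2^n} \ F_{2^s}. -/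
lemma quadAux {F : Type*} [Field F] [Fintype F] [CharP F 2] {n s m : ℕ}
    (hn : n = s * m) (hm : Odd m) (hcard : Fintype.card F = 2 ^ n)
    (p r v : F) (hp : p ^ (2^s) = p) (hr : r ^ (2^s) = r)
    (hv : v*v + p*v + r = 0) : v ^ (2^s) = v := by
  have htwo : (2 : F) = 0 := by exact_mod_cast CharP.cast_eq_zero F 2
  have frob : ∀ u u' : F, (u + u') ^ (2^s) = u ^ (2^s) + u' ^ (2^s) :=
    fun u u' => add_pow_char_pow u u' 2 s
  have hv2 : (v^(2^s))*(v^(2^s)) + p*(v^(2^s)) + r = 0 := by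
    have h : (v*v + p*v + r) ^ (2^s) = 0 ^ (2^s) := by rw [hv]
    rwa [zero_pow (Nat.pos_of_ne_zero (by positivity)).ne', frob, frob, mul_pow, mul_pow,
      hp, hr] at h
  set w := v ^ (2^s) with hw
  have hfac : (w + v) * ((w + v) + p) = 0 := by
    linear_combination hv2 + hv + (w*v - r) * htwo
  rcases mul_eq_zero.mp hfac with h0 | h0
  · linear_combination h0 - v * htwo
  · have hw1 : w = v + p := by linear_combination h0 - (v + p) * htwo
    have h2s : w ^ (2^s) = v := by
      rw [hw1, frob, hp, ← hw, hw1]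
      linear_combination p * htwo
    have key : ∀ j : ℕ, v ^ ((2^s) ^ (2*j)) = v := by
      intro j
      induction j with
      | zero => simp
      | succ j ih =>
        have : 2*(j+1) = 2*j + 1 + 1 := by ring
        rw [this, pow_succ, pow_succ, pow_mul, pow_mul, ih, ← pow_mul, pow_mul]
        exact h2s
    obtain ⟨t, ht⟩ := hm
    have hvm : v ^ ((2^s)^m) = v := by
      rw [show (2^s)^m = 2^(s*m) from (pow_mul 2 s m).symm, ← hn, ← hcard]
      exact FiniteField.pow_card v
    have hvm' : v ^ ((2^s)^m) = v + p := by
      rw [ht, pow_succ, pow_mul, key t]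
      exact hw1
    have hp0 : p = 0 := by
      have := hvm.symm.trans hvm'
      linear_combination -this
    rw [hw1, hp0, add_zero]

/-- Let `n = 4k = s·m` with `k` and `m` odd. In the field `F` with `2^n`
elements (with subfield `F_{2^s} = {x | x^(2^s) = x}`), for every `b ∈ F_{2^s}` the equation
`x^(2^{2k}+2^k) + x^(2^{2k}+1) + x^(2^k+1) + x^(2^{2k}) + x^(2^k) + x = b`
has no solution `x ∈ F \ F_{2^s}`. -/
theorem stmt4 {F : Type*} [Field F] [Fintype F] (n s m k : ℕ)
    (hn4 : n = 4 * k) (hn : n = s * m) (hkodd : Odd k) (hm : Odd m)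
    (hcard : Fintype.card F = 2 ^ n) :
    ∀ b x : F, b ^ (2 ^ s) = b → ¬ (x ^ (2 ^ s) = x) →
      x ^ (2 ^ (2 * k) + 2 ^ k) + x ^ (2 ^ (2 * k) + 1) + x ^ (2 ^ k + 1)
        + x ^ (2 ^ (2 * k)) + x ^ (2 ^ k) + x ≠ b := by
  -- characteristic 2
  haveI hchar : CharP F 2 := by
    obtain ⟨p, hp⟩ := CharP.exists F
    haveI := hp
    have hpp : p.Prime := CharP.char_is_prime F p
    obtain ⟨f, _, hcf⟩ := FiniteField.card F p
    have : p = 2 := by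
      have hd : p ∣ 2 ^ n := by rw [← hcard, hcf]; exact dvd_pow_self p f.pos.ne'
      exact (Nat.prime_dvd_prime_iff_eq hpp Nat.prime_two).mp (hpp.dvd_of_dvd_pow hd)
    subst this; exact hp
  intro b x hb hx heq
  apply hx
  have htwo : (2 : F) = 0 := by exact_mod_cast CharP.cast_eq_zero F 2
  have frobk : ∀ u u' : F, (u + u') ^ (2^k) = u ^ (2^k) + u' ^ (2^k) :=
    fun u u' => add_pow_char_pow u u' 2 k
  have frobs : ∀ u u' : F, (u + u') ^ (2^s) = u ^ (2^s) + u' ^ (2^s) :=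
    fun u u' => add_pow_char_pow u u' 2 s
  have powcomm : ∀ (i j : ℕ) (u : F), (u ^ i) ^ j = (u ^ j) ^ i := by
    intro i j u; rw [← pow_mul, mul_comm, pow_mul]
  rw [pow_add, pow_add, pow_add, pow_one] at heq
  set y := x ^ (2^k) with hydef
  set z := x ^ (2^(2*k)) with hzdef
  set w := x ^ (2^(3*k)) with hwdef
  -- heq : z * y + z * x + y * x + z + y + x = b
  have hy : y ^ (2^k) = z := by
    rw [hydef, ← pow_mul, ← pow_add, ← two_mul]
  have hz : z ^ (2^k) = w := by
    rw [hzdef, ← pow_mul, ← pow_add, show 2*k + k = 3*k by ring]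
  have hwx : w ^ (2^k) = x := by
    rw [hwdef, ← pow_mul, ← pow_add, show 3*k + k = n by omega, ← hcard]
    exact FiniteField.pow_card x
  -- conjugated equations
  have heq1 : w*z + w*y + z*y + w + z + y = b ^ (2^k) := by
    have h := congrArg (fun u : F => u ^ (2^k)) heq
    simpa only [frobk, mul_pow, hy, hz, hwx, ← hydef] using h
  have heq2 : x*w + x*z + w*z + x + w + z = (b ^ (2^k)) ^ (2^k) := by
    have h := congrArg (fun u : F => u ^ (2^k)) heq1
    simpa only [frobk, mul_pow, hy, hz, hwx, ← hydef] using h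
  have heq3 : y*x + y*w + x*w + y + x + w = ((b ^ (2^k)) ^ (2^k)) ^ (2^k) := by
    have h := congrArg (fun u : F => u ^ (2^k)) heq2
    simpa only [frobk, mul_pow, hy, hz, hwx, ← hydef] using h
  -- subfield membership of b-conjugates
  have hbq : (b ^ (2^k)) ^ (2^s) = b ^ (2^k) := by rw [powcomm, hb]
  have hbq2 : ((b ^ (2^k)) ^ (2^k)) ^ (2^s) = (b ^ (2^k)) ^ (2^k) := by rw [powcomm, hbq]
  have hbq3 : (((b ^ (2^k)) ^ (2^k)) ^ (2^k)) ^ (2^s) = ((b ^ (2^k)) ^ (2^k)) ^ (2^k) := by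
    rw [powcomm, hbq2]
  -- the quadratic for d = x + w
  have R1 : (x+w)*(z+y) + (x+w) = b + b ^ (2^k) := by
    linear_combination heq + heq1 - (z*y + z + y) * htwo
  have R3 : (z+y)*((x+w)+1) = (b ^ (2^k)) ^ (2^k) + ((b ^ (2^k)) ^ (2^k)) ^ (2^k) := by
    linear_combination heq2 + heq3 - (x*w + x + w) * htwo
  have hzy : z + y = (x+w) + (b + b ^ (2^k) + (b ^ (2^k)) ^ (2^k) + ((b ^ (2^k)) ^ (2^k)) ^ (2^k)) := by
    linear_combination R1 + R3 - ((x+w)*(z+y) + (x+w)) * htwo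
  have hquadd : (x+w)*(x+w)
      + ((b + b ^ (2^k) + (b ^ (2^k)) ^ (2^k) + ((b ^ (2^k)) ^ (2^k)) ^ (2^k)) + 1)*(x+w)
      + (b + b ^ (2^k)) = 0 := by
    linear_combination R1 + (x+w)*hzy + (b ^ (2^k) + b + w*(((b ^ (2^k)) ^ (2^k)) ^ (2^k)) + w*((b ^ (2^k)) ^ (2^k)) + w*(b ^ (2^k)) + w*b + w*w - z*w - y*w + x*(((b ^ (2^k)) ^ (2^k)) ^ (2^k)) + x*((b ^ (2^k)) ^ (2^k)) + x*(b ^ (2^k)) + x*b + 2*x*w - x*z - x*y + x*x) * htwo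
  have hpB : ((b + b ^ (2^k) + (b ^ (2^k)) ^ (2^k) + ((b ^ (2^k)) ^ (2^k)) ^ (2^k)) + 1) ^ (2^s)
      = (b + b ^ (2^k) + (b ^ (2^k)) ^ (2^k) + ((b ^ (2^k)) ^ (2^k)) ^ (2^k)) + 1 := by
    simp only [frobs, one_pow, hb, hbq, hbq2, hbq3]
  have hd : (x+w) ^ (2^s) = x+w := by
    refine quadAux hn hm hcard _ _ _ hpB ?_ hquadd
    simp only [frobs, hb, hbq]
  -- the quadratic for a = x + z
  have R1a : (y+w)*((x+z)+1) = b + (b ^ (2^k)) ^ (2^k) := by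
    linear_combination heq + heq2 - (x*z + z + x) * htwo
  have R2a : (x+z)*((y+w)+1) = b ^ (2^k) + ((b ^ (2^k)) ^ (2^k)) ^ (2^k) := by
    linear_combination heq1 + heq3 - (w*y + w + y) * htwo
  have hyw : y + w = (x+z) + (b + b ^ (2^k) + (b ^ (2^k)) ^ (2^k) + ((b ^ (2^k)) ^ (2^k)) ^ (2^k)) := by
    linear_combination R1a + R2a - ((y+w)*(x+z) + (x+z)) * htwo
  have hquada : (x+z)*(x+z)
      + ((b + b ^ (2^k) + (b ^ (2^k)) ^ (2^k) + ((b ^ (2^k)) ^ (2^k)) ^ (2^k)) + 1)*(x+z)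
      + ((b + b ^ (2^k) + (b ^ (2^k)) ^ (2^k) + ((b ^ (2^k)) ^ (2^k)) ^ (2^k)) + (b + (b ^ (2^k)) ^ (2^k))) = 0 := by
    linear_combination R1a + ((x+z)+1)*hyw + ((((b ^ (2^k)) ^ (2^k)) ^ (2^k)) + 2*((b ^ (2^k)) ^ (2^k)) + (b ^ (2^k)) + 2*b - w + z + z*(((b ^ (2^k)) ^ (2^k)) ^ (2^k)) + z*((b ^ (2^k)) ^ (2^k)) + z*(b ^ (2^k)) + z*b - z*w + z*z - y - y*z + x + x*(((b ^ (2^k)) ^ (2^k)) ^ (2^k)) + x*((b ^ (2^k)) ^ (2^k)) + x*(b ^ (2^k)) + x*b - x*w + 2*x*z - x*y + x*x) * htwo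
  have ha : (x+z) ^ (2^s) = x+z := by
    refine quadAux hn hm hcard _ _ _ hpB ?_ hquada
    simp only [frobs, hb, hbq, hbq2, hbq3]
  -- f = x + y lies in the subfield
  have hfd : (x+w) ^ (2^k) = x + y := by
    rw [frobk, hwx, ← hydef]; ring
  have hf : (x+y) ^ (2^s) = x+y := by
    rw [← hfd, powcomm, hd]
  -- final quadratic for x
  have hquadx : x*x + 1*x + ((x+z)*(x+y) + (x+z) + (x+y) + b) = 0 := by
    linear_combination heq + (x*x + x + b) * htwo
  refine quadAux hn hm hcard 1 _ x (one_pow _) ?_ hquadx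
  rw [frobs, frobs, frobs, mul_pow, ha, hf, hb]
end

section
/- Let n = 4k = sm with k and m odd and s even. Let f be a permutation of F_{2^s} that is differentially at most 6-uniform on F_{2^s}. Then the function F defined by F(x)=f(x) for x ∈ F_{2^s} and F(x)=x^{2^{2k}+2^k+1} for x ∉ F_{2^s} is a permutation of F_{2^n} with differential uniformity at most 6. -/
open Finset Function Polynomial

lemma Nat.coprime_sq_add_add_one_pow_four_sub_one {q : ℕ} (hq : q % 3 = 2) :
    Nat.Coprime (q ^ 2 + q + 1) (q ^ 4 - 1) := by
  have hq' : (q : ℤ) = 3 * (q / 3 : ℕ) + 2 := by omega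
  rw [← Nat.isCoprime_iff_coprime, Nat.cast_sub (Nat.one_le_pow _ _ (by omega))]
  push_cast
  have h₃ : IsCoprime (3 : ℤ) ((q : ℤ) - 1) := ⟨-(q / 3 : ℕ), 1, by rw [hq']; ring⟩
  have h₁ : IsCoprime ((q : ℤ) ^ 2 + q + 1) ((q : ℤ) - 1) := by
    rw [show (q : ℤ) ^ 2 + q + 1 = 3 + (q + 2) * (q - 1) by ring]
    exact h₃.add_mul_right_left _
  rw [show (q : ℤ) ^ 4 - 1 = q - 1 + (q ^ 2 + q + 1) * (q ^ 2 - q) by ring]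
  exact h₁.add_mul_left_right _

lemma two_pow_mod_three_of_odd {k : ℕ} (hk : Odd k) : 2 ^ k % 3 = 2 := by
  obtain ⟨j, rfl⟩ := hk
  rw [pow_succ, pow_mul, Nat.mul_mod, Nat.pow_mod]
  norm_num

lemma pow_injective_of_coprime_card_sub_one {K : Type*} [Field K] [Fintype K] {d : ℕ}
    (hd0 : d ≠ 0) (hd : d.Coprime (Fintype.card K - 1)) : Injective fun x : K => x ^ d := by
  intro x y hxy
  simp only at hxy
  by_cases hy : y = 0
  · subst hy
    rw [zero_pow hd0] at hxy
    exact (pow_eq_zero_iff hd0).mp hxy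
  have hx : x ≠ 0 := fun hx => hy ((pow_eq_zero_iff hd0).mp (by rw [← hxy, hx, zero_pow hd0]))
  rw [← div_eq_one_iff_eq hy, ← pow_eq_one_iff_of_coprime hd]
  exact ⟨by rw [div_pow, hxy, div_self (pow_ne_zero _ hy)],
    FiniteField.pow_card_sub_one_eq_one _ (div_ne_zero hx hy)⟩

lemma card_le_two_of_forall_sq_add_mul_add_eq_zero {K : Type*} [Field K] {α β : K}
    {t : Finset K} (ht : ∀ x ∈ t, x ^ 2 + α * x + β = 0) : t.card ≤ 2 := by
  have hdeg : (X ^ 2 + C α * X + C β).natDegree = 2 := by compute_degree!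
  have hp : X ^ 2 + C α * X + C β ≠ 0 := fun h => by simp [h] at hdeg
  exact hdeg ▸ card_le_degree_of_subset_roots fun x hx => by simpa [mem_roots hp] using ht x hx

lemma delta_eq_card_filter {F : Type*} [Field F] [Fintype F] [DecidableEq F] (G : F → F)
    (a b : F) : delta G a b = (univ.filter fun x => G (x + a) + G x = b).card :=
  Nat.card_eq_fintype_card.trans (Fintype.card_subtype _)

section CharTwo

variable {F : Type*} [Field F] [CharP F 2]

def conjElemSymm (φ : F →+* F) (u : F) : F :=
  φ (φ u) * φ u + φ (φ u) * u + φ u * u + φ (φ u) + φ u + u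

lemma sq_add_mul_add_eq_zero_of_conjElemSymm_eq (φ : F →+* F) (hφ : ∀ x, φ (φ (φ (φ x))) = x)
    {u c : F} (hu : conjElemSymm φ u = c) :
    (u + φ u) ^ 2 + (c + φ c + φ (φ c) + φ (φ (φ c)) + 1) * (u + φ u) + (φ c + φ (φ c)) = 0 := by
  have two : (2 : F) = 0 := CharTwo.two_eq_zero
  have hu₁ := congrArg φ hu
  have hu₂ := congrArg φ hu₁
  simp only [conjElemSymm, map_add, map_mul, hφ] at hu hu₁ hu₂
  have hPQ : (u + φ u) * (φ (φ u) + φ (φ (φ u))) + (u + φ u) = φ c + φ (φ c) := by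
    linear_combination hu₁ + hu₂ - (φ (φ (φ u)) * φ (φ u) + φ (φ (φ u)) + φ (φ u)) * two
  have hQP := congrArg (fun x => φ (φ x)) hPQ
  simp only [map_add, map_mul, hφ] at hQP
  have hsum : u + φ u + (φ (φ u) + φ (φ (φ u))) = c + φ c + φ (φ c) + φ (φ (φ c)) := by
    linear_combination hPQ + hQP - (u + φ u) * (φ (φ u) + φ (φ (φ u))) * two
  linear_combination -(u + φ u) * hsum + hPQ + ((u + φ u) ^ 2 + φ c + φ (φ c)) * two

lemma eq_or_eq_add_one_of_conjElemSymm_eq (φ : F →+* F) {u u' : F}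
    (hE : conjElemSymm φ u = conjElemSymm φ u') (hP : u + φ u = u' + φ u') :
    u' = u ∨ u' = u + 1 := by
  have two : (2 : F) = 0 := CharTwo.two_eq_zero
  have h₁ : φ u' = φ u + (u + u') := by linear_combination -hP - u' * two
  have h₂ : φ (φ u') = φ (φ u) + (u + u') := by
    rw [h₁, map_add, map_add, h₁]
    linear_combination φ u * two
  have h : (u' + u) * (u' + u + 1) = 0 := by
    rw [conjElemSymm, conjElemSymm, h₂, h₁] at hE
    linear_combination -hE - u' * (1 + u + φ (φ u) + φ u + u') * two
  rcases mul_eq_zero.mp h with h | h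
  · exact Or.inl (by linear_combination h - u * two)
  · exact Or.inr (by linear_combination h - (u + 1) * two)

lemma card_filter_conjElemSymm_eq_le_four [DecidableEq F] (φ : F →+* F)
    (hφ : ∀ x, φ (φ (φ (φ x))) = x) (c : F) (s : Finset F) :
    (s.filter fun u => conjElemSymm φ u = c).card ≤ 4 := by
  set T := s.filter fun u => conjElemSymm φ u = c
  have hfiber : ∀ P ∈ T.image (fun u => u + φ u), (T.filter fun u => u + φ u = P).card ≤ 2 := by
    intro P hP
    obtain ⟨u, hu, rfl⟩ := mem_image.mp hP
    refine (card_le_card fun u' hu' => ?_).trans (card_le_two (a := u) (b := u + 1))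
    obtain ⟨hu'T, hP'⟩ := mem_filter.mp hu'
    have hE := (mem_filter.mp hu).2.trans (mem_filter.mp hu'T).2.symm
    rcases eq_or_eq_add_one_of_conjElemSymm_eq φ hE hP'.symm with rfl | rfl <;> simp
  have himage : (T.image fun u => u + φ u).card ≤ 2 := by
    refine card_le_two_of_forall_sq_add_mul_add_eq_zero
      (α := c + φ c + φ (φ c) + φ (φ (φ c)) + 1) (β := φ c + φ (φ c)) fun P hP => ?_
    obtain ⟨u, hu, rfl⟩ := mem_image.mp hP
    exact sq_add_mul_add_eq_zero_of_conjElemSymm_eq φ hφ (mem_filter.mp hu).2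
  have := card_le_mul_card_image T 2 hfiber
  omega

lemma conjElemSymm_iterateFrobenius (k : ℕ) (u : F) :
    conjElemSymm (iterateFrobenius F 2 k) u =
      (u + 1) ^ (2 ^ (2 * k) + 2 ^ k + 1) + u ^ (2 ^ (2 * k) + 2 ^ k + 1) + 1 := by
  have two : (2 : F) = 0 := CharTwo.two_eq_zero
  have h₁ : ∀ x : F, x ^ 2 ^ k = iterateFrobenius F 2 k x := fun x => rfl
  have h₂ : ∀ x : F, x ^ 2 ^ (2 * k) = iterateFrobenius F 2 k (iterateFrobenius F 2 k x) := by
    intro x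
    rw [two_mul, ← iterateFrobenius_add_apply, iterateFrobenius_def]
  simp only [pow_add, pow_one, h₁, h₂, map_add, map_one, conjElemSymm]
  set φ := iterateFrobenius F 2 k
  linear_combination (-(φ (φ u) * φ u * u) - 1) * two

lemma delta_pow_le_four [Fintype F] {k : ℕ} (hF : ∀ x : F, x ^ 2 ^ (4 * k) = x) {a : F}
    (ha : a ≠ 0) (b : F) : delta (fun x : F => x ^ (2 ^ (2 * k) + 2 ^ k + 1)) a b ≤ 4 := by
  classical
  rw [delta_eq_card_filter]
  have hφ : ∀ x, (iterateFrobenius F 2 k)^[4] x = x := fun x => by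
    rw [← iterateFrobenius_mul_apply, iterateFrobenius_def, mul_comm, hF]
  refine le_trans (card_le_card_of_injOn (· / a) (t := univ.filter fun u =>
      conjElemSymm (iterateFrobenius F 2 k) u = b / a ^ (2 ^ (2 * k) + 2 ^ k + 1) + 1)
    (fun z hz => ?_) fun _ _ _ _ h => (div_left_inj' ha).mp h)
    (card_filter_conjElemSymm_eq_le_four _ hφ _ _)
  have hz := (mem_filter.mp hz).2
  refine mem_coe.mpr (mem_filter.mpr ⟨mem_univ _, ?_⟩)
  rw [conjElemSymm_iterateFrobenius, ← hz, div_add_one ha, div_pow, div_pow, ← add_div]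

end CharTwo

section Orbit

variable {R : Type*} [Ring R] [CharP R 2] (σ : R →+* R) {m : ℕ} {a : R}

lemma eq_zero_of_iterate_eq_add (hm : Odd m) (hσm : σ^[m] = id) (hσa : σ a = a) {t : ℕ}
    {w : R} (h : σ^[t] w = w + a) : a = 0 := by
  have hj : ∀ j : ℕ, σ^[t * j] w = w + j • a := by
    intro j
    induction j with
    | zero => simp
    | succ j ih =>
      rw [Nat.mul_succ, iterate_add_apply, h, iterate_map_add, ih, iterate_fixed hσa,
        succ_nsmul, add_assoc]
  have hw := hj m
  rw [mul_comm, iterate_mul, hσm, iterate_id, id, nsmul_eq_mul,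
    natCast_eq_one_of_odd_of_two_eq_zero hm CharTwo.two_eq_zero, one_mul] at hw
  simpa using hw

lemma iterate_ne_iterate_add (hm : Odd m) (hσm : σ^[m] = id) (hσa : σ a = a) (ha : a ≠ 0)
    (w : R) (i j : ℕ) : σ^[i] w ≠ σ^[j] w + a := by
  intro h
  rcases le_total j i with hji | hij
  · refine ha (eq_zero_of_iterate_eq_add σ hm hσm hσa (t := i - j) (w := σ^[j] w) ?_)
    rw [← iterate_add_apply, Nat.sub_add_cancel hji, h]
  · refine ha (eq_zero_of_iterate_eq_add σ hm hσm hσa (t := j - i) (w := σ^[i] w) ?_)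
    rw [← iterate_add_apply, Nat.sub_add_cancel hij, h, CharTwo.add_cancel_right]

lemma isFixedPt_of_mem_of_card_lt_six [DecidableEq R] (hm : Odd m) (hσm : σ^[m] = id)
    (hσa : σ a = a) (ha : a ≠ 0) {T : Finset R} (hT : T.card < 6) (hσT : ∀ x ∈ T, σ x ∈ T)
    (haT : ∀ x ∈ T, x + a ∈ T) {z : R} (hz : z ∈ T) : IsFixedPt σ z := by
  by_contra hfix
  set p := minimalPeriod σ z
  have hp_odd : Odd p := hm.of_dvd_nat (IsPeriodicPt.minimalPeriod_dvd (congrFun hσm z))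
  have hp_ne_one : p ≠ 1 := mt minimalPeriod_eq_one_iff_isFixedPt.mp hfix
  set O := (range p).image (σ^[·] z)
  have hO : O.card = p := by
    rw [card_image_of_injOn (iterate_injOn_Iio_minimalPeriod.mono (by rw [coe_range])),
      card_range]
  have hOT : O ⊆ T := by
    have hiter : ∀ i, σ^[i] z ∈ T := fun i => by
      induction i with
      | zero => exact hz
      | succ i ih => rw [iterate_succ_apply']; exact hσT _ ih
    intro x hx
    obtain ⟨i, -, rfl⟩ := mem_image.mp hx
    exact hiter i
  have hdisj : Disjoint O (O.image (· + a)) := by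
    simp only [O, disjoint_left, mem_image]
    rintro _ ⟨i, -, rfl⟩ ⟨_, ⟨j, -, rfl⟩, hji⟩
    exact iterate_ne_iterate_add σ hm hσm hσa ha z i j hji.symm
  have hcard : 2 * p ≤ T.card := by
    calc 2 * p = (O ∪ O.image (· + a)).card := by
          rw [card_union_of_disjoint hdisj, card_image_of_injective _ (add_left_injective a), hO]
          ring
      _ ≤ T.card := card_le_card (union_subset hOT fun x hx => by
          obtain ⟨y, hy, rfl⟩ := mem_image.mp hx
          exact haT y (hOT hy))
  obtain ⟨r, hr⟩ := hp_odd
  omega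

end Orbit

lemma isFixedPt_of_add_pow_add_pow_eq {F : Type*} [Field F] [Fintype F] [CharP F 2]
    (σ : F →+* F) {m k : ℕ} (hm : Odd m) (hσm : σ^[m] = id) (hF : ∀ x : F, x ^ 2 ^ (4 * k) = x)
    {a b : F} (ha : a ≠ 0) (hσa : σ a = a) (hσb : σ b = b) {z : F}
    (hz : (z + a) ^ (2 ^ (2 * k) + 2 ^ k + 1) + z ^ (2 ^ (2 * k) + 2 ^ k + 1) = b) :
    IsFixedPt σ z := by
  classical
  have hcard := delta_pow_le_four hF ha b
  rw [delta_eq_card_filter] at hcard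
  set d := 2 ^ (2 * k) + 2 ^ k + 1
  refine isFixedPt_of_mem_of_card_lt_six σ hm hσm hσa ha
    (T := univ.filter fun x => (x + a) ^ d + x ^ d = b) (by omega) (fun x hx => ?_)
    (fun x hx => ?_) (mem_filter.mpr ⟨mem_univ z, hz⟩)
  · obtain ⟨-, hx⟩ := mem_filter.mp hx
    refine mem_filter.mpr ⟨mem_univ _, ?_⟩
    rw [← hσa, ← map_add, ← map_pow, ← map_pow, ← map_add, hx, hσb]
  · obtain ⟨-, hx⟩ := mem_filter.mp hx
    exact mem_filter.mpr ⟨mem_univ _, by rw [CharTwo.add_cancel_right, add_comm, hx]⟩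

lemma bijective_piecewise {α : Type*} [Finite α] {S : Set α} [DecidablePred (· ∈ S)]
    {f g : α → α} (hf : Set.MapsTo f S S) (hf' : Set.InjOn f S) (hg : Set.InjOn g Sᶜ)
    (hg' : Set.MapsTo g Sᶜ Sᶜ) : Bijective (S.piecewise f g) :=
  Finite.injective_iff_bijective.mp <| (Set.injective_piecewise_iff S).mpr
    ⟨hf', hg, fun _ hx _ hy h => hg' hy (h ▸ hf hx)⟩

section Piecewise

variable {F : Type*} [Field F] [CharP F 2] {S : Set F} {f g : F → F} {a b : F}

lemma add_mem_iff_of_mem (hS : ∀ x ∈ S, ∀ y ∈ S, x + y ∈ S) {x : F} (ha : a ∈ S) :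
    x + a ∈ S ↔ x ∈ S :=
  ⟨fun h => CharTwo.add_cancel_right x a ▸ hS _ h _ ha, fun h => hS _ h _ ha⟩

variable [DecidablePred (· ∈ S)]

lemma delta_piecewise_eq_deltaOn (hS : ∀ x ∈ S, ∀ y ∈ S, x + y ∈ S)
    (hgS : ∀ a ∈ S, a ≠ 0 → ∀ b ∈ S, ∀ z, g (z + a) + g z = b → z ∈ S)
    (ha : a ∈ S) (ha0 : a ≠ 0) (hb : b ∈ S) :
    delta (S.piecewise f g) a b = deltaOn S f a b := by
  refine Nat.card_congr (Equiv.subtypeEquivRight fun x => ?_)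
  by_cases hx : x ∈ S
  · have hxa := (add_mem_iff_of_mem hS ha).mpr hx
    rw [Set.piecewise_eq_of_mem _ _ _ hx, Set.piecewise_eq_of_mem _ _ _ hxa]
    exact (and_iff_right hx).symm
  · have hxa : x + a ∉ S := mt (add_mem_iff_of_mem hS ha).mp hx
    rw [Set.piecewise_eq_of_notMem _ _ _ hx, Set.piecewise_eq_of_notMem _ _ _ hxa]
    exact iff_of_false (fun h => hx (hgS a ha ha0 b hb x h)) (fun h => hx h.1)

variable [Fintype F] [DecidableEq F]

lemma delta_piecewise_le_delta_of_mem_of_notMem (hS : ∀ x ∈ S, ∀ y ∈ S, x + y ∈ S)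
    (hf : Set.MapsTo f S S) (ha : a ∈ S) (hb : b ∉ S) :
    delta (S.piecewise f g) a b ≤ delta g a b := by
  rw [delta_eq_card_filter, delta_eq_card_filter]
  refine card_le_card fun x hx => ?_
  obtain ⟨-, hx⟩ := mem_filter.mp hx
  have hxS : x ∉ S := fun hxS => by
    have hxa := (add_mem_iff_of_mem hS ha).mpr hxS
    rw [Set.piecewise_eq_of_mem _ _ _ hxS, Set.piecewise_eq_of_mem _ _ _ hxa] at hx
    exact hb (hx ▸ hS _ (hf hxa) _ (hf hxS))
  rw [Set.piecewise_eq_of_notMem _ _ _ hxS,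
    Set.piecewise_eq_of_notMem _ _ _ (mt (add_mem_iff_of_mem hS ha).mp hxS)] at hx
  exact mem_filter.mpr ⟨mem_univ x, hx⟩

lemma card_filter_mem_piecewise_le_one (hS : ∀ x ∈ S, ∀ y ∈ S, x + y ∈ S)
    (hf : Set.MapsTo f S S) (hgS : ∀ a ∈ S, a ≠ 0 → ∀ b ∈ S, ∀ z, g (z + a) + g z = b → z ∈ S)
    (ha : a ∉ S) :
    (univ.filter fun x => x ∈ S ∧ S.piecewise f g (x + a) + S.piecewise f g x = b).card ≤ 1 := by
  have two : (2 : F) = 0 := CharTwo.two_eq_zero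
  have hnot : ∀ x ∈ S, x + a ∉ S := fun x hx hxa =>
    ha ((add_mem_iff_of_mem hS hx).mp (add_comm x a ▸ hxa))
  refine card_le_one.mpr fun x₁ h₁ x₂ h₂ => ?_
  obtain ⟨-, hx₁, h₁⟩ := mem_filter.mp h₁
  obtain ⟨-, hx₂, h₂⟩ := mem_filter.mp h₂
  rw [Set.piecewise_eq_of_notMem _ _ _ (hnot _ hx₁), Set.piecewise_eq_of_mem _ _ _ hx₁] at h₁
  rw [Set.piecewise_eq_of_notMem _ _ _ (hnot _ hx₂), Set.piecewise_eq_of_mem _ _ _ hx₂] at h₂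
  by_contra hne
  -- `x₂ + a` solves the equation for `g` in the direction `x₁ + x₂ ∈ S`
  refine hnot x₂ hx₂ (hgS (x₁ + x₂) (hS _ hx₁ _ hx₂) (mt CharTwo.add_eq_zero.mp hne)
    (f x₁ + f x₂) (hS _ (hf hx₁) _ (hf hx₂)) (x₂ + a) ?_)
  rw [show x₂ + a + (x₁ + x₂) = x₁ + a by linear_combination x₂ * two]
  linear_combination h₁ - h₂ + (g (x₂ + a) - f x₁) * two

lemma delta_piecewise_le_add_delta_of_notMem (hS : ∀ x ∈ S, ∀ y ∈ S, x + y ∈ S)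
    (hf : Set.MapsTo f S S) (hgS : ∀ a ∈ S, a ≠ 0 → ∀ b ∈ S, ∀ z, g (z + a) + g z = b → z ∈ S)
    (ha : a ∉ S) : delta (S.piecewise f g) a b ≤ 2 + delta g a b := by
  rw [delta_eq_card_filter, delta_eq_card_filter]
  set T := univ.filter fun x => x ∈ S ∧ S.piecewise f g (x + a) + S.piecewise f g x = b
  set U := univ.filter fun x => g (x + a) + g x = b
  have hT : T.card ≤ 1 := card_filter_mem_piecewise_le_one hS hf hgS ha
  have hsub : (univ.filter fun x => S.piecewise f g (x + a) + S.piecewise f g x = b) ⊆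
      T ∪ T.image (· + a) ∪ U := by
    intro x hx
    obtain ⟨-, hx⟩ := mem_filter.mp hx
    simp only [mem_union, mem_image, mem_filter, mem_univ, true_and, T, U]
    by_cases hxS : x ∈ S
    · exact Or.inl (Or.inl ⟨hxS, hx⟩)
    by_cases hxa : x + a ∈ S
    · exact Or.inl (Or.inr ⟨x + a, ⟨hxa, by rwa [CharTwo.add_cancel_right, add_comm]⟩,
        CharTwo.add_cancel_right x a⟩)
    · rw [Set.piecewise_eq_of_notMem _ _ _ hxS, Set.piecewise_eq_of_notMem _ _ _ hxa] at hx
      exact Or.inr hx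
  calc _ ≤ (T ∪ T.image (· + a) ∪ U).card := card_le_card hsub
    _ ≤ T.card + T.card + U.card := by grw [card_union_le, card_union_le, card_image_le]
    _ ≤ _ := by omega

theorem delta_piecewise_le_six (hS : ∀ x ∈ S, ∀ y ∈ S, x + y ∈ S) (hf : Set.MapsTo f S S)
    (hf6 : ∀ a ∈ S, a ≠ 0 → ∀ b ∈ S, deltaOn S f a b ≤ 6)
    (hg4 : ∀ a : F, a ≠ 0 → ∀ b, delta g a b ≤ 4)
    (hgS : ∀ a ∈ S, a ≠ 0 → ∀ b ∈ S, ∀ z, g (z + a) + g z = b → z ∈ S) (ha : a ≠ 0) :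
    delta (S.piecewise f g) a b ≤ 6 := by
  have hg := hg4 a ha b
  by_cases haS : a ∈ S
  · by_cases hbS : b ∈ S
    · exact (delta_piecewise_eq_deltaOn hS hgS haS ha hbS).trans_le (hf6 a haS ha b hbS)
    · have := delta_piecewise_le_delta_of_mem_of_notMem (g := g) hS hf haS hbS
      omega
  · have := delta_piecewise_le_add_delta_of_notMem (b := b) hS hf hgS haS
    omega

end Piecewise

theorem stmt5_general {F : Type*} [Field F] [Fintype F] (n s m k : ℕ)
    (hn4 : n = 4 * k) (hn : n = s * m) (hkodd : Odd k) (hm : Odd m)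
    (hcard : Fintype.card F = 2 ^ n)
    (S : Set F) (hS : S = {x : F | x ^ (2 ^ s) = x})
    (f : F → F) (hfperm : Set.BijOn f S S)
    (hf6 : ∀ a ∈ S, a ≠ 0 → ∀ b ∈ S, deltaOn S f a b ≤ 6)
    (Fn : F → F)
    (hFn1 : ∀ x ∈ S, Fn x = f x)
    (hFn2 : ∀ x ∉ S, Fn x = x ^ (2 ^ (2 * k) + 2 ^ k + 1)) :
    Function.Bijective Fn ∧ ∀ a b : F, a ≠ 0 → delta Fn a b ≤ 6 := by
  classical
  have : CharP F 2 := charP_of_card_eq_prime_pow hcard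
  have hF : ∀ x : F, x ^ 2 ^ (4 * k) = x := fun x => by rw [← hn4, ← hcard, FiniteField.pow_card]
  set σ := iterateFrobenius F 2 s
  have hSσ : ∀ x, x ∈ S ↔ IsFixedPt σ x := fun x => by rw [hS]; rfl
  have hσm : σ^[m] = id := funext fun x => by
    rw [← iterateFrobenius_mul_apply, iterateFrobenius_def, ← hn, ← hcard, FiniteField.pow_card, id]
  have hSadd : ∀ x ∈ S, ∀ y ∈ S, x + y ∈ S := fun x hx y hy => by
    rw [hSσ] at hx hy ⊢
    rw [IsFixedPt, map_add, hx, hy]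
  set d := 2 ^ (2 * k) + 2 ^ k + 1
  have hd : Injective fun x : F => x ^ d := by
    refine pow_injective_of_coprime_card_sub_one (by positivity) ?_
    rw [hcard, hn4, mul_comm, pow_mul, show d = (2 ^ k) ^ 2 + 2 ^ k + 1 by rw [← pow_mul, mul_comm]]
    exact Nat.coprime_sq_add_add_one_pow_four_sub_one (two_pow_mod_three_of_odd hkodd)
  have hdS : ∀ x, x ^ d ∈ S ↔ x ∈ S := fun x => by
    rw [hSσ, hSσ, IsFixedPt, IsFixedPt, map_pow, hd.eq_iff]
  have hgS : ∀ a ∈ S, a ≠ 0 → ∀ b ∈ S, ∀ z, (z + a) ^ d + z ^ d = b → z ∈ S :=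
    fun a ha ha0 b hb z hz => (hSσ z).mpr <| isFixedPt_of_add_pow_add_pow_eq σ hm hσm hF ha0
      ((hSσ a).mp ha) ((hSσ b).mp hb) hz
  obtain rfl : Fn = S.piecewise f (· ^ d) := funext fun x => by
    by_cases hx : x ∈ S <;> simp [hx, hFn1, hFn2, d]
  exact ⟨bijective_piecewise hfperm.mapsTo hfperm.injOn hd.injOn fun x hx => mt (hdS x).mp hx,
    fun a b ha => delta_piecewise_le_six hSadd hfperm.mapsTo hf6
      (fun a ha b => delta_pow_le_four hF ha b) hgS ha⟩

/-- Let `n = 4k = s·m` with `k`, `m` odd and `s` even. Let `F = F_{2^n}`,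
`S = F_{2^s}`, and let `f` be a permutation of `S` which is differentially at most 6-uniform
on `S`. Then the piecewise function `Fn` (equal to `f` on `S` and to the Bracken–Leander
function `x^(2^{2k}+2^k+1)` off `S`) is a permutation of `F` with differential uniformity
at most 6. -/
theorem stmt5 {F : Type*} [Field F] [Fintype F] (n s m k : ℕ)
    (hn4 : n = 4 * k) (hn : n = s * m) (hkodd : Odd k) (hm : Odd m) (hs : Even s)
    (hcard : Fintype.card F = 2 ^ n)
    (S : Set F) (hS : S = {x : F | x ^ (2 ^ s) = x})
    (f : F → F) (hfperm : Set.BijOn f S S)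
    (hf6 : ∀ a ∈ S, a ≠ 0 → ∀ b ∈ S, deltaOn S f a b ≤ 6)
    (Fn : F → F)
    (hFn1 : ∀ x ∈ S, Fn x = f x)
    (hFn2 : ∀ x ∉ S, Fn x = x ^ (2 ^ (2 * k) + 2 ^ k + 1)) :
    Function.Bijective Fn ∧ ∀ a b : F, a ≠ 0 → delta Fn a b ≤ 6 :=
  stmt5_general n s m k hn4 hn hkodd hm hcard S hS f hfperm hf6 Fn hFn1 hFn2
end

section
/- Let F be a permutation of F_{2^n}. Then the algebraic degree of F equals n-1 if and only if the algebraic degree of the compositional inverse F^{-1} equals n-1. -/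
/-- The 2-weight of a natural number: the number of ones in its binary expansion. -/
def w2 (i : ℕ) : ℕ := (Nat.digits 2 i).sum

/-- The algebraic degree of (the function represented by) a polynomial: the maximum 2-weight
of an exponent with nonzero coefficient. -/
noncomputable def algDeg {F : Type*} [Field F] (p : Polynomial F) : ℕ :=
  sSup {d : ℕ | ∃ i, p.coeff i ≠ 0 ∧ w2 i = d}

open Finset Polynomial

lemma w2_rec (i : ℕ) : w2 i = i % 2 + w2 (i / 2) := by
  rcases Nat.eq_zero_or_pos i with h | h
  · subst h; simp [w2]
  · unfold w2
    rw [Nat.digits_def' (by norm_num : 1 < 2) h, List.sum_cons]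

lemma w2_comp : ∀ n : ℕ, ∀ i < 2 ^ n, w2 i + w2 (2 ^ n - 1 - i) = n := by
  intro n
  induction n with
  | zero =>
    intro i hi
    simp only [pow_zero] at hi
    have h0 : i = 0 := by omega
    subst h0
    simp [w2]
  | succ n ih =>
    intro i hi
    have h2 : (2:ℕ) ^ (n+1) = 2 * 2 ^ n := by ring
    have hpos : 0 < (2:ℕ) ^ n := Nat.two_pow_pos n
    have h1 : i / 2 < 2 ^ n := by omega
    have e1 : (2 ^ (n+1) - 1 - i) % 2 = 1 - i % 2 := by omega
    have e2 : (2 ^ (n+1) - 1 - i) / 2 = 2 ^ n - 1 - i / 2 := by omega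
    have hih := ih (i / 2) h1
    rw [w2_rec i, w2_rec (2 ^ (n+1) - 1 - i), e1, e2]
    omega

lemma w2_eq_zero : ∀ i : ℕ, w2 i = 0 → i = 0 := by
  intro i
  induction i using Nat.strong_induction_on with
  | _ i ih =>
    intro h
    rw [w2_rec] at h
    by_contra hne
    have h2 : i / 2 < i := Nat.div_lt_self (Nat.pos_of_ne_zero hne) one_lt_two
    have := ih (i / 2) h2 (by omega)
    omega

lemma w2_pow (j : ℕ) : w2 (2 ^ j) = 1 := by
  induction j with
  | zero => simp [w2]
  | succ j ihj =>
    rw [w2_rec]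
    have h2 : (2:ℕ) ^ (j+1) = 2 * 2 ^ j := by ring
    have hpos : 0 < (2:ℕ) ^ j := Nat.two_pow_pos j
    have e1 : 2 ^ (j+1) % 2 = 0 := by omega
    have e2 : 2 ^ (j+1) / 2 = 2 ^ j := by omega
    rw [e1, e2, ihj]

lemma w2_eq_one : ∀ i : ℕ, w2 i = 1 → ∃ j, i = 2 ^ j := by
  intro i
  induction i using Nat.strong_induction_on with
  | _ i ih =>
    intro h
    have hne : i ≠ 0 := by
      rintro rfl
      simp [w2] at h
    rw [w2_rec] at h
    rcases Nat.mod_two_eq_zero_or_one i with hm | hm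
    · have hd : i / 2 < i := Nat.div_lt_self (Nat.pos_of_ne_zero hne) one_lt_two
      obtain ⟨j, hj⟩ := ih (i / 2) hd (by omega)
      exact ⟨j + 1, by rw [pow_succ]; omega⟩
    · have h0 := w2_eq_zero (i / 2) (by omega)
      exact ⟨0, by omega⟩

section Field

variable {F : Type*} [Field F] [Fintype F]

lemma sum_pow_all (k : ℕ) :
    ∑ x : F, x ^ k =
      if k ≠ 0 ∧ (Fintype.card F - 1) ∣ k then -1 else 0 := by
  classical
  have hq2 : 2 ≤ Fintype.card F := Fintype.one_lt_card
  split_ifs with h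
  · obtain ⟨hk0, hdvd⟩ := h
    have hval : ∀ x : F, x ^ k = if x = 0 then 0 else 1 := by
      intro x
      split_ifs with hx
      · subst hx; exact zero_pow hk0
      · obtain ⟨m, rfl⟩ := hdvd
        rw [pow_mul, FiniteField.pow_card_sub_one_eq_one x hx, one_pow]
    rw [Finset.sum_congr rfl fun x _ => hval x]
    rw [← Finset.add_sum_erase _ _ (Finset.mem_univ (0:F))]
    rw [if_pos rfl, zero_add]
    have hone : ∀ x ∈ Finset.univ.erase (0:F), (if x = 0 then (0:F) else 1) = 1 := by
      intro x hx
      rw [if_neg (Finset.ne_of_mem_erase hx)]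
    rw [Finset.sum_congr rfl hone, Finset.sum_const,
      Finset.card_erase_of_mem (Finset.mem_univ _), Finset.card_univ, nsmul_eq_mul, mul_one]
    rw [Nat.cast_sub (by omega), FiniteField.cast_card_eq_zero, Nat.cast_one, zero_sub]
  · push_neg at h
    by_cases hk0 : k = 0
    · subst hk0
      simp [Finset.card_univ, FiniteField.cast_card_eq_zero]
    · have hndvd := h hk0
      set r := k % (Fintype.card F - 1) with hr
      have hrlt : r < Fintype.card F - 1 := Nat.mod_lt _ (by omega)
      have hrne : r ≠ 0 := fun h0 => hndvd (Nat.dvd_of_mod_eq_zero h0)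
      have hval : ∀ x : F, x ^ k = x ^ r := by
        intro x
        by_cases hx : x = 0
        · subst hx; rw [zero_pow hk0, zero_pow hrne]
        · conv_lhs => rw [← Nat.mod_add_div k (Fintype.card F - 1)]
          rw [pow_add, pow_mul, FiniteField.pow_card_sub_one_eq_one x hx, one_pow, mul_one]
      rw [Finset.sum_congr rfl fun x _ => hval x]
      exact FiniteField.sum_pow_lt_card_sub_one (K := F) r hrlt

lemma coeff_formula (p : Polynomial F) (hdeg : p.natDegree < Fintype.card F)
    (m : ℕ) (hm : m < Fintype.card F - 1) :
    ∑ c : F, p.eval c * c ^ m = - p.coeff (Fintype.card F - 1 - m) := by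
  classical
  have hq2 : 2 ≤ Fintype.card F := Fintype.one_lt_card
  have step1 : ∀ c : F, p.eval c * c ^ m =
      ∑ i ∈ Finset.range (Fintype.card F), p.coeff i * c ^ (i + m) := by
    intro c
    rw [Polynomial.eval_eq_sum_range' hdeg, Finset.sum_mul]
    exact Finset.sum_congr rfl fun i _ => by rw [pow_add, mul_assoc]
  rw [Finset.sum_congr rfl fun c _ => step1 c, Finset.sum_comm]
  have step2 : ∀ i, ∑ c : F, p.coeff i * c ^ (i + m) = p.coeff i * ∑ c : F, c ^ (i + m) :=
    fun i => (Finset.mul_sum _ _ _).symm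
  rw [Finset.sum_congr rfl fun i _ => step2 i]
  rw [Finset.sum_eq_single (Fintype.card F - 1 - m)]
  · have he : Fintype.card F - 1 - m + m = Fintype.card F - 1 := by omega
    rw [he, sum_pow_all, if_pos ⟨by omega, dvd_rfl⟩, mul_neg_one]
  · intro i hi hne
    have hiq : i < Fintype.card F := Finset.mem_range.mp hi
    rw [sum_pow_all, if_neg, mul_zero]
    rintro ⟨hk0, hdvd⟩
    obtain ⟨t, ht⟩ := hdvd
    match t with
    | 0 => omega
    | 1 => omega
    | (t+2) =>
      have : (Fintype.card F - 1) * (t+2) ≥ (Fintype.card F - 1) * 2 :=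
        Nat.mul_le_mul_left _ (by omega)
      omega
  · intro h
    exact absurd (Finset.mem_range.mpr (by omega)) h

end Field

lemma algDeg_iff {F : Type*} [Field F] (n : ℕ) (hn : 2 ≤ n) (p : Polynomial F)
    (hdeg : p.natDegree ≤ 2 ^ n - 1) (htop : p.coeff (2 ^ n - 1) = 0) :
    algDeg p = n - 1 ↔ ∃ j < n, p.coeff (2 ^ n - 1 - 2 ^ j) ≠ 0 := by
  have hpn : 0 < (2:ℕ) ^ n := Nat.two_pow_pos n
  have hbd : ∀ d ∈ {d : ℕ | ∃ i, p.coeff i ≠ 0 ∧ w2 i = d}, d ≤ n - 1 := by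
    rintro d ⟨i, hc, rfl⟩
    have hile : i ≤ 2 ^ n - 1 := le_trans (Polynomial.le_natDegree_of_ne_zero hc) hdeg
    have hi : i < 2 ^ n := by omega
    have hcomp := w2_comp n i hi
    by_contra hgt
    have h0 : w2 (2 ^ n - 1 - i) = 0 := by omega
    have hieq : i = 2 ^ n - 1 := by have := w2_eq_zero _ h0; omega
    rw [hieq] at hc
    exact hc htop
  have hbdd : BddAbove {d : ℕ | ∃ i, p.coeff i ≠ 0 ∧ w2 i = d} := ⟨n - 1, hbd⟩
  constructor
  · intro h
    have hne : {d : ℕ | ∃ i, p.coeff i ≠ 0 ∧ w2 i = d}.Nonempty := by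
      by_contra hne
      rw [Set.not_nonempty_iff_eq_empty] at hne
      have h0 : algDeg p = 0 := by rw [algDeg, hne, csSup_empty]; rfl
      omega
    have hmem := Nat.sSup_mem hne hbdd
    rw [show sSup {d : ℕ | ∃ i, p.coeff i ≠ 0 ∧ w2 i = d} = algDeg p from rfl, h] at hmem
    obtain ⟨i, hc, hw⟩ := hmem
    have hile : i ≤ 2 ^ n - 1 := le_trans (Polynomial.le_natDegree_of_ne_zero hc) hdeg
    have hi : i < 2 ^ n := by omega
    have hcomp := w2_comp n i hi
    have h1 : w2 (2 ^ n - 1 - i) = 1 := by omega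
    obtain ⟨j, hj⟩ := w2_eq_one _ h1
    have hjle : 2 ^ j ≤ 2 ^ n - 1 := by omega
    have hjlt : j < n := by
      by_contra hge
      have : 2 ^ n ≤ 2 ^ j := Nat.pow_le_pow_right (by norm_num) (by omega)
      omega
    refine ⟨j, hjlt, ?_⟩
    have hieq : i = 2 ^ n - 1 - 2 ^ j := by omega
    rwa [← hieq]
  · rintro ⟨j, hjn, hc⟩
    have h2j : 2 ^ j < 2 ^ n := Nat.pow_lt_pow_right (by norm_num) hjn
    have hw : w2 (2 ^ n - 1 - 2 ^ j) = n - 1 := by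
      have := w2_comp n (2 ^ j) h2j
      have := w2_pow j
      omega
    have hmem : (n - 1) ∈ {d : ℕ | ∃ i, p.coeff i ≠ 0 ∧ w2 i = d} := ⟨_, hc, hw⟩
    exact le_antisymm (csSup_le ⟨_, hmem⟩ hbd) (le_csSup hbdd hmem)

/-- If a polynomial of degree at most 1 represents an injective function on a (nontrivial)
field, its algebraic degree is not 0. -/
lemma algDeg_ne_zero_of_deg_one {F : Type*} [Field F] (r : Polynomial F) (f : F → F)
    (hinj : Function.Injective f) (hdeg : r.natDegree ≤ 1) (hr : ∀ x, r.eval x = f x) :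
    algDeg r ≠ 0 := by
  have hc1 : r.coeff 1 ≠ 0 := by
    intro h1
    have heval : ∀ x : F, r.eval x = r.coeff 0 := by
      intro x
      rw [Polynomial.eval_eq_sum_range' (lt_of_le_of_lt hdeg one_lt_two)]
      rw [show (2:ℕ) = 1 + 1 from rfl, Finset.sum_range_succ, Finset.sum_range_one, h1]
      simp
    obtain ⟨a, b, hab⟩ := exists_pair_ne F
    exact hab (hinj (by rw [← hr a, ← hr b, heval a, heval b]))
  have hbd : ∀ d ∈ {d : ℕ | ∃ i, r.coeff i ≠ 0 ∧ w2 i = d}, d ≤ 1 := by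
    rintro d ⟨i, hc, rfl⟩
    have hi : i ≤ 1 := le_trans (Polynomial.le_natDegree_of_ne_zero hc) hdeg
    interval_cases i
    · simp [w2]
    · rw [w2_rec]; simp [w2]
  have hmem : 1 ∈ {d : ℕ | ∃ i, r.coeff i ≠ 0 ∧ w2 i = d} :=
    ⟨1, hc1, by rw [w2_rec]; simp [w2]⟩
  have hle := le_csSup (⟨1, hbd⟩ : BddAbove _) hmem
  rw [show sSup {d : ℕ | ∃ i, r.coeff i ≠ 0 ∧ w2 i = d} = algDeg r from rfl] at hle
  omega

/-- Let `F` be the field with `2^n` elements and let `Fn` be a permutation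
of `F` with compositional inverse `G`. If `p` and `q` are the (unique) polynomials of degree
at most `2^n - 1` representing `Fn` and `G` respectively, then the algebraic degree of `Fn`
equals `n - 1` if and only if the algebraic degree of `G` equals `n - 1`. -/
theorem stmt11 {F : Type*} [Field F] [Fintype F] (n : ℕ)
    (hcard : Fintype.card F = 2 ^ n)
    (Fn G : F → F) (hbij : Function.Bijective Fn)
    (hGl : ∀ x, G (Fn x) = x) (hGr : ∀ x, Fn (G x) = x)
    (p q : Polynomial F)
    (hpdeg : p.natDegree ≤ 2 ^ n - 1) (hp : ∀ x, p.eval x = Fn x)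
    (hqdeg : q.natDegree ≤ 2 ^ n - 1) (hq : ∀ x, q.eval x = G x) :
    algDeg p = n - 1 ↔ algDeg q = n - 1 := by
  classical
  have hq2 : 2 ≤ Fintype.card F := Fintype.one_lt_card
  have hGbij : Function.Bijective G :=
    ⟨fun a b hab => by rw [← hGr a, ← hGr b, hab],
     fun y => ⟨Fn y, hGl y⟩⟩
  rcases Nat.lt_or_ge n 2 with hn | hn2
  · -- small cases n = 0, 1
    interval_cases n
    · exfalso
      rw [hcard] at hq2
      norm_num at hq2
    · norm_num at hpdeg hqdeg ⊢
      exact iff_of_false (algDeg_ne_zero_of_deg_one p Fn hbij.1 hpdeg hp)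
        (algDeg_ne_zero_of_deg_one q G hGbij.1 hqdeg hq)
  -- main case n ≥ 2
  have hpn : 0 < (2:ℕ) ^ n := Nat.two_pow_pos n
  have hq4 : 4 ≤ 2 ^ n := by
    calc (4:ℕ) = 2 ^ 2 := by norm_num
    _ ≤ 2 ^ n := Nat.pow_le_pow_right (by norm_num) hn2
  have hq4' : 4 ≤ Fintype.card F := by omega
  -- characteristic 2
  have hchar2 : (2 : F) = 0 := by
    have hc0 : ((Fintype.card F : ℕ) : F) = 0 := FiniteField.cast_card_eq_zero F
    rw [hcard] at hc0
    push_cast at hc0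
    exact pow_eq_zero_iff (by omega) |>.mp hc0
  have hring : ringChar F = 2 := by
    have hdvd : ringChar F ∣ 2 := ringChar.dvd (by exact_mod_cast hchar2)
    have hne1 : ringChar F ≠ 1 := CharP.ringChar_ne_one
    have := (Nat.dvd_prime Nat.prime_two).mp hdvd
    omega
  haveI hcharP : CharP F 2 := ringChar.of_eq hring
  haveI : Fact (Nat.Prime 2) := ⟨Nat.prime_two⟩
  haveI : ExpChar F 2 := expChar_prime F 2
  -- the transfer identity
  have key : ∀ (f g : F → F), Function.Bijective f → (∀ x, g (f x) = x) →
      ∀ j ≤ n, (∑ c : F, f c * c ^ 2 ^ j) = (∑ c : F, g c * c ^ 2 ^ (n - j)) ^ 2 ^ j := by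
    intro f g hb hg j hj
    rw [sum_pow_char_pow]
    have hterm : ∀ c : F, (g c * c ^ 2 ^ (n - j)) ^ 2 ^ j = (g c) ^ 2 ^ j * c := by
      intro c
      rw [mul_pow, ← pow_mul, ← pow_add]
      congr 1
      rw [show n - j + j = n by omega, ← hcard]
      exact FiniteField.pow_card c
    rw [Finset.sum_congr rfl fun c _ => hterm c]
    have hre := Fintype.sum_bijective f hb (fun x => x ^ 2 ^ j * f x)
      (fun c => (g c) ^ 2 ^ j * c)
      (fun x => by show x ^ 2 ^ j * f x = (g (f x)) ^ 2 ^ j * (f x); rw [hg x])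
    rw [← hre]
    exact Finset.sum_congr rfl fun c _ => mul_comm _ _
  -- coefficient formulas
  have hpub : p.natDegree < Fintype.card F := by rw [hcard]; omega
  have hqub : q.natDegree < Fintype.card F := by rw [hcard]; omega
  have hcoeff : ∀ (r : Polynomial F) (f : F → F), r.natDegree < Fintype.card F →
      (∀ x, r.eval x = f x) → ∀ j < n,
      r.coeff (2 ^ n - 1 - 2 ^ j) = - ∑ c : F, f c * c ^ 2 ^ j := by
    intro r f hdeg hr j hjn
    have h2j : 2 ^ j < 2 ^ n - 1 := by
      have h1 : 2 ^ j ≤ 2 ^ (n-1) := Nat.pow_le_pow_right (by norm_num) (by omega)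
      have h2 : 2 ^ (n-1) * 2 = 2 ^ n := by
        rw [← pow_succ]
        congr 1
        omega
      omega
    have hcf := coeff_formula r hdeg (2 ^ j) (by rw [hcard]; omega)
    rw [hcard] at hcf
    rw [Finset.sum_congr rfl fun c _ => by rw [hr c]] at hcf
    rw [hcf, neg_neg]
  -- top coefficient vanishes
  have htopc : ∀ (r : Polynomial F) (f : F → F), Function.Bijective f →
      r.natDegree < Fintype.card F → (∀ x, r.eval x = f x) → r.coeff (2 ^ n - 1) = 0 := by
    intro r f hb hdeg hr
    have hcf := coeff_formula r hdeg 0 (by omega)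
    rw [hcard, Nat.sub_zero] at hcf
    have hs : ∑ c : F, r.eval c * c ^ 0 = ∑ c : F, f c :=
      Finset.sum_congr rfl fun c _ => by rw [hr c, pow_zero, mul_one]
    have hreidx : ∑ c : F, f c = ∑ x : F, x :=
      Fintype.sum_bijective f hb _ _ (fun x => rfl)
    have hzero : ∑ x : F, x = 0 := by
      have h1 := FiniteField.sum_pow_lt_card_sub_one (K := F) 1 (by omega)
      simpa using h1
    rw [hs, hreidx, hzero] at hcf
    exact neg_eq_zero.mp hcf.symm
  -- the one-direction transfer of nonvanishing sums
  have dir : ∀ (f g : F → F), Function.Bijective f → (∀ x, g (f x) = x) →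
      (∃ j < n, (∑ c : F, f c * c ^ 2 ^ j) ≠ 0) →
      (∃ j < n, (∑ c : F, g c * c ^ 2 ^ j) ≠ 0) := by
    rintro f g hb hg ⟨j, hjn, hS⟩
    rw [key f g hb hg j (le_of_lt hjn)] at hS
    have hT : (∑ c : F, g c * c ^ 2 ^ (n - j)) ≠ 0 := by
      intro h0
      exact hS (by rw [h0, zero_pow (Nat.two_pow_pos j).ne'])
    by_cases hj0 : j = 0
    · subst hj0
      refine ⟨0, by omega, ?_⟩
      have hEq : ∑ c : F, g c * c ^ 2 ^ (n - 0) = ∑ c : F, g c * c ^ 2 ^ 0 := by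
        refine Finset.sum_congr rfl fun c _ => ?_
        rw [show (2:ℕ) ^ (n - 0) = Fintype.card F by rw [hcard, Nat.sub_zero],
          FiniteField.pow_card, pow_zero, pow_one]
      rwa [← hEq]
    · exact ⟨n - j, by omega, hT⟩
  rw [algDeg_iff n hn2 p hpdeg (htopc p Fn hbij hpub hp),
    algDeg_iff n hn2 q hqdeg (htopc q G hGbij hqub hq)]
  constructor
  · rintro ⟨j, hjn, hc⟩
    have hS : (∑ c : F, Fn c * c ^ 2 ^ j) ≠ 0 := by
      rw [hcoeff p Fn hpub hp j hjn] at hc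
      exact fun h0 => hc (by rw [h0, neg_zero])
    obtain ⟨m, hmn, hT⟩ := dir Fn G hbij hGl ⟨j, hjn, hS⟩
    refine ⟨m, hmn, ?_⟩
    rw [hcoeff q G hqub hq m hmn]
    exact neg_ne_zero.mpr hT
  · rintro ⟨j, hjn, hc⟩
    have hS : (∑ c : F, G c * c ^ 2 ^ j) ≠ 0 := by
      rw [hcoeff q G hqub hq j hjn] at hc
      exact fun h0 => hc (by rw [h0, neg_zero])
    obtain ⟨m, hmn, hT⟩ := dir G Fn hGbij hGr ⟨j, hjn, hS⟩
    refine ⟨m, hmn, ?_⟩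
    rw [hcoeff p Fn hpub hp m hmn]
    exact neg_ne_zero.mpr hT
end

section
/- Let n = sm and let f, g be polynomials with coefficients in F_{2^s} such that g permutes F_{2^n}, g satisfies (H3), and the piecewise function F (F(x)=f(x) on F_{2^s}, F(x)=g(x) off F_{2^s}) is a permutation of F_{2^n}. Then for all a, b ∈ F_{2^n} \ {0}: if a, b ∈ F_{2^s} \ {0}, then β_F(a,b) ≤ β_f(a,b) + β_g(a,b), where β_f(a,b) is computed for f as a function on F_{2^s}; if a ∈ F_{2^s} \ {0} and b ∉ F_{2^s}, then β_F(a,b) ≤ β_g(a,b); and if a, b ∉ F_{2^s}, then β_F(a,b) ≤ β_g(a,b) + 4N + 2, where N is the number of α ∈ F_{2^n} \ F_{2^s} such that the equation f(x)+g(x+α)=b has a solution x ∈ F_{2^s}. -/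
/-- `beta f a b` is the number of pairs `(x, y)` with `f x + f y = b` and
`f (x+a) + f (y+a) = b` (the boomerang counting function). -/
noncomputable def beta {F : Type*} [Field F] (f : F → F) (a b : F) : ℕ :=
  Nat.card {p : F × F // f p.1 + f p.2 = b ∧ f (p.1 + a) + f (p.2 + a) = b}

/-- `betaOn S f a b` is the number of pairs `(x, y) ∈ S × S` with `f x + f y = b` and
`f (x+a) + f (y+a) = b` (the boomerang counting function of `f` as a function on `S`). -/
noncomputable def betaOn {F : Type*} [Field F] (S : Set F) (f : F → F) (a b : F) : ℕ :=
  Nat.card {p : F × F // p.1 ∈ S ∧ p.2 ∈ S ∧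
    f p.1 + f p.2 = b ∧ f (p.1 + a) + f (p.2 + a) = b}

/-- Let `n = s·m`, `F = F_{2^n}`, `S = F_{2^s}`, and let `f, g` be induced
by polynomials with coefficients in `S`, with `g` permuting `F` and satisfying (H3), such
that the piecewise function `Fn` (equal to `f` on `S`, to `g` off `S`) is a permutation of
`F`. Then for all nonzero `a, b`: if `a, b ∈ S` then `β_F(a,b) ≤ β_f(a,b) + β_g(a,b)`
(with `β_f` computed on `S`); if `a ∈ S` and `b ∉ S` then `β_F(a,b) ≤ β_g(a,b)`;
and if `a, b ∉ S` then `β_F(a,b) ≤ β_g(a,b) + 4·N + 2`, where `N` is the number of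
`α ∉ S` such that `f(x) + g(x+α) = b` has a solution `x ∈ S`. -/
theorem stmt12 {F : Type*} [Field F] [Fintype F] (n s m : ℕ)
    (hn : n = s * m) (hcard : Fintype.card F = 2 ^ n)
    (S : Set F) (hS : S = {x : F | x ^ (2 ^ s) = x})
    (f g : F → F) (p q : Polynomial F)
    (hp : ∀ i, p.coeff i ∈ S) (hq : ∀ i, q.coeff i ∈ S)
    (hf : ∀ x, f x = p.eval x) (hg : ∀ x, g x = q.eval x)
    (hgperm : Function.Bijective g)
    (hH3 : ∀ a ∈ S, a ≠ 0 → ∀ b ∈ S, ∀ x, x ∉ S → g x + g (x + a) ≠ b)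
    (Fn : F → F)
    (hFn1 : ∀ x ∈ S, Fn x = f x) (hFn2 : ∀ x ∉ S, Fn x = g x)
    (hFnperm : Function.Bijective Fn) :
    ∀ a b : F, a ≠ 0 → b ≠ 0 →
      (a ∈ S → b ∈ S → beta Fn a b ≤ betaOn S f a b + beta g a b) ∧
      (a ∈ S → b ∉ S → beta Fn a b ≤ beta g a b) ∧
      (a ∉ S → b ∉ S → beta Fn a b ≤ beta g a b +
        4 * Nat.card {α : F // α ∉ S ∧ ∃ x ∈ S, f x + g (x + α) = b} + 2) := by
  classical
  -- characteristic 2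
  have hn0 : n ≠ 0 := by
    rintro rfl
    have := Fintype.one_lt_card (α := F)
    omega
  have h2 : (2 : F) = 0 := by
    have h := FiniteField.cast_card_eq_zero F
    rw [hcard] at h
    push_cast at h
    exact pow_eq_zero_iff hn0 |>.mp h
  haveI hchar : CharP F 2 := (CharP.charP_iff_prime_eq_zero Nat.prime_two).mpr h2
  -- S is closed under addition
  have hSadd : ∀ x ∈ S, ∀ y ∈ S, x + y ∈ S := by
    intro x hx y hy
    rw [hS] at *
    simp only [Set.mem_setOf_eq] at *
    rw [add_pow_char_pow, hx, hy]
  -- membership transfer: adding an element of S preserves non-membership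
  have hndS : ∀ (x : F), x ∉ S → ∀ c ∈ S, x + c ∉ S := by
    intro x hx c hc h
    apply hx
    have : x + c + c = x := by linear_combination c * h2
    rw [← this]
    exact hSadd _ h _ hc
  -- polynomial maps with coefficients in S map S to S
  have hevalS : ∀ (r : Polynomial F), (∀ i, r.coeff i ∈ S) → ∀ x ∈ S, r.eval x ∈ S := by
    intro r hr x hx
    rw [hS] at *
    simp only [Set.mem_setOf_eq] at *
    have key : (iterateFrobenius F 2 s) (r.eval x) = r.eval x := by
      have h1 : (iterateFrobenius F 2 s) (r.eval x)
          = (r.map (iterateFrobenius F 2 s)).eval ((iterateFrobenius F 2 s) x) := by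
        rw [Polynomial.eval_map, Polynomial.eval₂_hom]
      have h2' : r.map (iterateFrobenius F 2 s) = r := by
        ext i
        rw [Polynomial.coeff_map]
        have := hr i
        simpa [iterateFrobenius_def] using this
      have h3 : (iterateFrobenius F 2 s) x = x := by simpa [iterateFrobenius_def] using hx
      rw [h1, h2', h3]
    simpa [iterateFrobenius_def] using key
  have hfS : ∀ x ∈ S, f x ∈ S := by intro x hx; rw [hf]; exact hevalS p hp x hx
  have hgS : ∀ x ∈ S, g x ∈ S := by intro x hx; rw [hg]; exact hevalS q hq x hx
  -- express beta via ncard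
  have hbeta : ∀ (h : F → F) (a b : F),
      beta h a b = Set.ncard {r : F × F | h r.1 + h r.2 = b ∧ h (r.1 + a) + h (r.2 + a) = b} := by
    intro h a b
    rw [beta, ← Nat.card_coe_set_eq]
    rfl
  have hbetaOn : ∀ (a b : F),
      betaOn S f a b = Set.ncard {r : F × F | r.1 ∈ S ∧ r.2 ∈ S ∧
        f r.1 + f r.2 = b ∧ f (r.1 + a) + f (r.2 + a) = b} := by
    intro a b
    rw [betaOn, ← Nat.card_coe_set_eq]
    rfl
  intro a b ha hb
  set A : Set (F × F) := {r : F × F | Fn r.1 + Fn r.2 = b ∧ Fn (r.1 + a) + Fn (r.2 + a) = b}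
    with hA
  set G : Set (F × F) := {r : F × F | g r.1 + g r.2 = b ∧ g (r.1 + a) + g (r.2 + a) = b}
    with hG
  refine ⟨?_, ?_, ?_⟩
  · -- Case 1 : a ∈ S, b ∈ S
    intro haS hbS
    rw [hbeta, hbeta, hbetaOn]
    set Bf : Set (F × F) := {r : F × F | r.1 ∈ S ∧ r.2 ∈ S ∧
        f r.1 + f r.2 = b ∧ f (r.1 + a) + f (r.2 + a) = b} with hBf
    have hsub : A ⊆ Bf ∪ G := by
      rintro ⟨x, y⟩ ⟨e1, e2⟩
      simp only [Set.mem_setOf_eq] at e1 e2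
      by_cases hx : x ∈ S <;> by_cases hy : y ∈ S
      · -- both in S
        left
        have hxa : x + a ∈ S := hSadd x hx a haS
        have hya : y + a ∈ S := hSadd y hy a haS
        refine ⟨hx, hy, ?_, ?_⟩
        · rw [← hFn1 x hx, ← hFn1 y hy]; exact e1
        · rw [← hFn1 _ hxa, ← hFn1 _ hya]; exact e2
      · -- x ∈ S, y ∉ S : impossible
        exfalso
        have hxa : x + a ∈ S := hSadd x hx a haS
        have hya : y + a ∉ S := hndS y hy a haS
        rw [hFn1 x hx, hFn2 y hy] at e1
        rw [hFn1 _ hxa, hFn2 _ hya] at e2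
        refine hH3 a haS ha (f x + f (x + a)) (hSadd _ (hfS x hx) _ (hfS _ hxa)) y hy ?_
        linear_combination e1 + e2 + (b - f x - f (x + a)) * h2
      · -- y ∈ S, x ∉ S : impossible
        exfalso
        have hya : y + a ∈ S := hSadd y hy a haS
        have hxa : x + a ∉ S := hndS x hx a haS
        rw [hFn2 x hx, hFn1 y hy] at e1
        rw [hFn2 _ hxa, hFn1 _ hya] at e2
        refine hH3 a haS ha (f y + f (y + a)) (hSadd _ (hfS y hy) _ (hfS _ hya)) x hx ?_
        linear_combination e1 + e2 + (b - f y - f (y + a)) * h2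
      · -- both outside S
        right
        have hxa : x + a ∉ S := hndS x hx a haS
        have hya : y + a ∉ S := hndS y hy a haS
        rw [hFn2 x hx, hFn2 y hy] at e1
        rw [hFn2 _ hxa, hFn2 _ hya] at e2
        exact ⟨e1, e2⟩
    calc A.ncard ≤ (Bf ∪ G).ncard := Set.ncard_le_ncard hsub (Set.toFinite _)
      _ ≤ Bf.ncard + G.ncard := Set.ncard_union_le _ _
  · -- Case 2 : a ∈ S, b ∉ S
    intro haS hbS
    rw [hbeta, hbeta]
    have hsub : A ⊆ G := by
      rintro ⟨x, y⟩ ⟨e1, e2⟩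
      simp only [Set.mem_setOf_eq] at e1 e2
      by_cases hx : x ∈ S <;> by_cases hy : y ∈ S
      · exfalso
        apply hbS
        rw [hFn1 x hx, hFn1 y hy] at e1
        rw [← e1]; exact hSadd _ (hfS x hx) _ (hfS y hy)
      · exfalso
        have hxa : x + a ∈ S := hSadd x hx a haS
        have hya : y + a ∉ S := hndS y hy a haS
        rw [hFn1 x hx, hFn2 y hy] at e1
        rw [hFn1 _ hxa, hFn2 _ hya] at e2
        refine hH3 a haS ha (f x + f (x + a)) (hSadd _ (hfS x hx) _ (hfS _ hxa)) y hy ?_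
        linear_combination e1 + e2 + (b - f x - f (x + a)) * h2
      · exfalso
        have hya : y + a ∈ S := hSadd y hy a haS
        have hxa : x + a ∉ S := hndS x hx a haS
        rw [hFn2 x hx, hFn1 y hy] at e1
        rw [hFn2 _ hxa, hFn1 _ hya] at e2
        refine hH3 a haS ha (f y + f (y + a)) (hSadd _ (hfS y hy) _ (hfS _ hya)) x hx ?_
        linear_combination e1 + e2 + (b - f y - f (y + a)) * h2
      · have hxa : x + a ∉ S := hndS x hx a haS
        have hya : y + a ∉ S := hndS y hy a haS
        rw [hFn2 x hx, hFn2 y hy] at e1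
        rw [hFn2 _ hxa, hFn2 _ hya] at e2
        exact ⟨e1, e2⟩
    exact Set.ncard_le_ncard hsub (Set.toFinite _)
  · -- Case 3 : a ∉ S, b ∉ S
    intro haS hbS
    rw [hbeta, hbeta]
    set Nset : Set F := {α : F | α ∉ S ∧ ∃ x ∈ S, f x + g (x + α) = b} with hNset
    have hNcard : Nat.card {α : F // α ∉ S ∧ ∃ x ∈ S, f x + g (x + α) = b} = Nset.ncard := by
      rw [← Nat.card_coe_set_eq]; rfl
    rw [hNcard]
    -- key uniqueness from (H3)
    have huniq : ∀ (α : F), α ∉ S → ∀ x₁ ∈ S, ∀ x₂ ∈ S,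
        f x₁ + g (x₁ + α) = b → f x₂ + g (x₂ + α) = b → x₁ = x₂ := by
      intro α hα x₁ hx₁ x₂ hx₂ e₁ e₂
      by_contra hne
      have hc : x₁ + x₂ ∈ S := hSadd _ hx₁ _ hx₂
      have hc0 : x₁ + x₂ ≠ 0 := by
        intro h
        apply hne
        linear_combination h - x₂ * h2
      have hxn : x₁ + α ∉ S := by
        intro h
        apply hα
        have : x₁ + (x₁ + α) = α := by linear_combination x₁ * h2
        rw [← this]; exact hSadd _ hx₁ _ h
      refine hH3 (x₁ + x₂) hc hc0 (f x₁ + f x₂) (hSadd _ (hfS _ hx₁) _ (hfS _ hx₂))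
        (x₁ + α) hxn ?_
      have harg : x₁ + α + (x₁ + x₂) = x₂ + α := by linear_combination x₁ * h2
      rw [harg]
      linear_combination e₁ + e₂ + (b - f x₁ - f x₂) * h2
    -- the four "bad" pattern sets
    set B1 : Set (F × F) := {r : F × F | r ∈ A ∧ r.1 ∈ S} with hB1
    set B2 : Set (F × F) := {r : F × F | r ∈ A ∧ r.2 ∈ S} with hB2
    set B3 : Set (F × F) := {r : F × F | r ∈ A ∧ r.1 + a ∈ S} with hB3
    set B4 : Set (F × F) := {r : F × F | r ∈ A ∧ r.2 + a ∈ S} with hB4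
    have hsub : A ⊆ G ∪ (B1 ∪ B2 ∪ B3 ∪ B4) := by
      rintro ⟨x, y⟩ hr
      by_cases hx : x ∈ S
      · exact Or.inr (Or.inl (Or.inl (Or.inl ⟨hr, hx⟩)))
      by_cases hy : y ∈ S
      · exact Or.inr (Or.inl (Or.inl (Or.inr ⟨hr, hy⟩)))
      by_cases hxa : x + a ∈ S
      · exact Or.inr (Or.inl (Or.inr ⟨hr, hxa⟩))
      by_cases hya : y + a ∈ S
      · exact Or.inr (Or.inr ⟨hr, hya⟩)
      · left
        obtain ⟨e1, e2⟩ := hr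
        rw [hFn2 x hx, hFn2 y hy] at e1
        rw [hFn2 _ hxa, hFn2 _ hya] at e2
        exact ⟨e1, e2⟩
    -- facts used by pattern bounds
    have hB1le : B1.ncard ≤ Nset.ncard := by
      have hmem : ∀ r ∈ B1, r.2 ∉ S ∧ r.1 + r.2 ∉ S ∧ f r.1 + g (r.1 + (r.1 + r.2)) = b := by
        rintro ⟨x, y⟩ ⟨⟨e1, e2⟩, hx⟩
        simp only at hx e1 e2 ⊢
        have hy : y ∉ S := by
          intro hy
          apply hbS
          rw [hFn1 x hx, hFn1 y hy] at e1
          rw [← e1]; exact hSadd _ (hfS x hx) _ (hfS y hy)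
        have hxy : x + y ∉ S := by
          intro h
          apply hy
          have : x + (x + y) = y := by linear_combination x * h2
          rw [← this]; exact hSadd _ hx _ h
        refine ⟨hy, hxy, ?_⟩
        have harg : x + (x + y) = y := by linear_combination x * h2
        rw [harg]
        rw [hFn1 x hx, hFn2 y hy] at e1
        exact e1
      refine Set.ncard_le_ncard_of_injOn (fun r => r.1 + r.2) ?_ ?_ (Set.toFinite _)
      · rintro r hrB
        obtain ⟨hy, hxy, he⟩ := hmem r hrB
        exact ⟨hxy, r.1, hrB.2, he⟩
      · rintro r hrB r' hrB' hsum
        obtain ⟨hy, hxy, he⟩ := hmem r hrB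
        obtain ⟨hy', hxy', he'⟩ := hmem r' hrB'
        simp only at hsum
        have h1 : r.1 = r'.1 := by
          apply huniq (r.1 + r.2) hxy r.1 hrB.2 r'.1 hrB'.2 he
          rw [hsum]; exact he'
        have h2' : r.2 = r'.2 := by linear_combination hsum - h1
        exact Prod.ext h1 h2'
    have hB2le : B2.ncard ≤ Nset.ncard := by
      have hmem : ∀ r ∈ B2, r.1 ∉ S ∧ r.1 + r.2 ∉ S ∧ f r.2 + g (r.2 + (r.1 + r.2)) = b := by
        rintro ⟨x, y⟩ ⟨⟨e1, e2⟩, hy⟩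
        simp only at hy e1 e2 ⊢
        have hx : x ∉ S := by
          intro hx
          apply hbS
          rw [hFn1 x hx, hFn1 y hy] at e1
          rw [← e1]; exact hSadd _ (hfS x hx) _ (hfS y hy)
        have hxy : x + y ∉ S := by
          intro h
          apply hx
          have : y + (x + y) = x := by linear_combination y * h2
          rw [← this]; exact hSadd _ hy _ h
        refine ⟨hx, hxy, ?_⟩
        have harg : y + (x + y) = x := by linear_combination y * h2
        rw [harg]
        rw [hFn2 x hx, hFn1 y hy] at e1
        linear_combination e1
      refine Set.ncard_le_ncard_of_injOn (fun r => r.1 + r.2) ?_ ?_ (Set.toFinite _)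
      · rintro r hrB
        obtain ⟨hx, hxy, he⟩ := hmem r hrB
        exact ⟨hxy, r.2, hrB.2, he⟩
      · rintro r hrB r' hrB' hsum
        obtain ⟨hx, hxy, he⟩ := hmem r hrB
        obtain ⟨hx', hxy', he'⟩ := hmem r' hrB'
        simp only at hsum
        have h1 : r.2 = r'.2 := by
          apply huniq (r.1 + r.2) hxy r.2 hrB.2 r'.2 hrB'.2 he
          rw [hsum]; exact he'
        have h2' : r.1 = r'.1 := by linear_combination hsum - h1
        exact Prod.ext h2' h1
    have hB3le : B3.ncard ≤ Nset.ncard := by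
      have hmem : ∀ r ∈ B3, r.2 + a ∉ S ∧ r.1 + r.2 ∉ S ∧
          f (r.1 + a) + g ((r.1 + a) + (r.1 + r.2)) = b := by
        rintro ⟨x, y⟩ ⟨⟨e1, e2⟩, hxa⟩
        simp only at hxa e1 e2 ⊢
        have hya : y + a ∉ S := by
          intro hya
          apply hbS
          rw [hFn1 _ hxa, hFn1 _ hya] at e2
          rw [← e2]; exact hSadd _ (hfS _ hxa) _ (hfS _ hya)
        have hxy : x + y ∉ S := by
          intro h
          apply hya
          have : (x + a) + (x + y) = y + a := by linear_combination x * h2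
          rw [← this]; exact hSadd _ hxa _ h
        refine ⟨hya, hxy, ?_⟩
        have harg : (x + a) + (x + y) = y + a := by linear_combination x * h2
        rw [harg]
        rw [hFn1 _ hxa, hFn2 _ hya] at e2
        exact e2
      refine Set.ncard_le_ncard_of_injOn (fun r => r.1 + r.2) ?_ ?_ (Set.toFinite _)
      · rintro r hrB
        obtain ⟨hya, hxy, he⟩ := hmem r hrB
        exact ⟨hxy, r.1 + a, hrB.2, he⟩
      · rintro r hrB r' hrB' hsum
        obtain ⟨hya, hxy, he⟩ := hmem r hrB
        obtain ⟨hya', hxy', he'⟩ := hmem r' hrB'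
        simp only at hsum
        have h1 : r.1 + a = r'.1 + a := by
          apply huniq (r.1 + r.2) hxy (r.1 + a) hrB.2 (r'.1 + a) hrB'.2 he
          rw [hsum]; exact he'
        have h1' : r.1 = r'.1 := by linear_combination h1
        have h2' : r.2 = r'.2 := by linear_combination hsum - h1'
        exact Prod.ext h1' h2'
    have hB4le : B4.ncard ≤ Nset.ncard := by
      have hmem : ∀ r ∈ B4, r.1 + a ∉ S ∧ r.1 + r.2 ∉ S ∧
          f (r.2 + a) + g ((r.2 + a) + (r.1 + r.2)) = b := by
        rintro ⟨x, y⟩ ⟨⟨e1, e2⟩, hya⟩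
        simp only at hya e1 e2 ⊢
        have hxa : x + a ∉ S := by
          intro hxa
          apply hbS
          rw [hFn1 _ hxa, hFn1 _ hya] at e2
          rw [← e2]; exact hSadd _ (hfS _ hxa) _ (hfS _ hya)
        have hxy : x + y ∉ S := by
          intro h
          apply hxa
          have : (y + a) + (x + y) = x + a := by linear_combination y * h2
          rw [← this]; exact hSadd _ hya _ h
        refine ⟨hxa, hxy, ?_⟩
        have harg : (y + a) + (x + y) = x + a := by linear_combination y * h2
        rw [harg]
        rw [hFn2 _ hxa, hFn1 _ hya] at e2
        linear_combination e2
      refine Set.ncard_le_ncard_of_injOn (fun r => r.1 + r.2) ?_ ?_ (Set.toFinite _)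
      · rintro r hrB
        obtain ⟨hxa, hxy, he⟩ := hmem r hrB
        exact ⟨hxy, r.2 + a, hrB.2, he⟩
      · rintro r hrB r' hrB' hsum
        obtain ⟨hxa, hxy, he⟩ := hmem r hrB
        obtain ⟨hxa', hxy', he'⟩ := hmem r' hrB'
        simp only at hsum
        have h1 : r.2 + a = r'.2 + a := by
          apply huniq (r.1 + r.2) hxy (r.2 + a) hrB.2 (r'.2 + a) hrB'.2 he
          rw [hsum]; exact he'
        have h1' : r.2 = r'.2 := by linear_combination h1
        have h2' : r.1 = r'.1 := by linear_combination hsum - h1'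
        exact Prod.ext h2' h1'
    calc A.ncard ≤ (G ∪ (B1 ∪ B2 ∪ B3 ∪ B4)).ncard :=
          Set.ncard_le_ncard hsub (Set.toFinite _)
      _ ≤ G.ncard + (B1 ∪ B2 ∪ B3 ∪ B4).ncard := Set.ncard_union_le _ _
      _ ≤ G.ncard + ((B1 ∪ B2 ∪ B3).ncard + B4.ncard) := by
          gcongr; exact Set.ncard_union_le _ _
      _ ≤ G.ncard + (((B1 ∪ B2).ncard + B3.ncard) + B4.ncard) := by
          gcongr; exact Set.ncard_union_le _ _
      _ ≤ G.ncard + (((B1.ncard + B2.ncard) + B3.ncard) + B4.ncard) := by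
          gcongr; exact Set.ncard_union_le _ _
      _ ≤ G.ncard + 4 * Nset.ncard + 2 := by omega
end

section
/- Let n = sm with s even, s/2 odd and m odd, and let k be an integer with gcd(k,n)=2. Let F be defined by F(x) = x^{2^k+1}+1 for x ∈ F_{2^s} and F(x) = x^{2^k+1} for x ∉ F_{2^s}. Then for all a, b ∈ F_{2^n} \ {0}: β_F(a,b) ≤ 4 if a ∈ F_{2^s} \ {0} or b ∈ F_{2^s} \ {0}, and β_F(a,b) ≤ 22 if a, b ∉ F_{2^s}. -/
open Set

namespace GoldBoomerang

theorem pow_pow_gcd_eq_self {M : Type*} [MonoidWithZero M] [IsRightCancelMulZero M] {p a b : ℕ}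
    (hp : 0 < p) {z : M} (ha : z ^ p ^ a = z) (hb : z ^ p ^ b = z) : z ^ p ^ Nat.gcd a b = z := by
  rcases eq_or_ne z 0 with rfl | hz
  · exact zero_pow (pow_pos hp _).ne'
  have key : ∀ c, z ^ p ^ c = z ↔ z ^ (p ^ c - 1) = 1 := fun c => by
    conv_lhs => rw [← Nat.sub_add_cancel (Nat.one_le_pow c p hp), pow_succ]
    exact mul_eq_right₀ hz
  rw [key, ← Nat.pow_sub_one_gcd_pow_sub_one, pow_gcd_eq_one]
  exact ⟨(key a).1 ha, (key b).1 hb⟩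

theorem pow_four_pow_eq_self {M : Type*} [Monoid M] {c : M} (hc : c ^ 4 = c) (i : ℕ) :
    c ^ 4 ^ i = c := by
  induction i with
  | zero => simp
  | succ i ih => rw [pow_succ, pow_mul, ih, hc]

theorem pow_two_pow_eq_self_of_pow_four_eq_self {M : Type*} [Monoid M] {c : M} (hc : c ^ 4 = c)
    {j : ℕ} (hj : Even j) : c ^ 2 ^ j = c := by
  obtain ⟨i, rfl⟩ := hj
  rw [← two_mul, pow_mul]
  exact pow_four_pow_eq_self hc i

theorem odd_mul_div_two {s m : ℕ} (hs : Even s) (hs2 : Odd (s / 2)) (hm : Odd m) :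
    Odd (s * m / 2) := by
  rw [Nat.mul_div_right_comm hs.two_dvd]
  exact hs2.mul hm

theorem gcd_two_mul_eq_two {k n : ℕ} (hk : Nat.gcd k n = 2) (hn : Odd (n / 2)) :
    Nat.gcd (2 * k) n = 2 := by
  obtain ⟨h, rfl⟩ : 2 ∣ n := hk ▸ Nat.gcd_dvd_right k n
  rw [Nat.mul_div_cancel_left h two_pos] at hn
  have hdvd : Nat.gcd k h ∣ 2 :=
    hk ▸ Nat.dvd_gcd (Nat.gcd_dvd_left k h) (dvd_mul_of_dvd_right (Nat.gcd_dvd_right k h) 2)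
  rcases (Nat.dvd_prime Nat.prime_two).1 hdvd with h1 | h2
  · rw [Nat.gcd_mul_left, h1]
  · exact absurd (h2 ▸ Nat.gcd_dvd_right k h) hn.not_two_dvd_nat

theorem ncard_union_preimage_swap_le {α : Type*} (P : Set (α × α)) :
    (P ∪ Prod.swap ⁻¹' P).ncard ≤ 2 * P.ncard := by
  have hswap : (Prod.swap ⁻¹' P).ncard = P.ncard :=
    ncard_preimage_of_injective_subset_range Prod.swap_injective
      (by simp [Prod.swap_surjective.range_eq])
  have := ncard_union_le P (Prod.swap ⁻¹' P)
  omega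

section Field

variable {F : Type*} [Field F]

def goldForm (k : ℕ) (v x : F) : F := v ^ 2 ^ k * x + v * x ^ 2 ^ k

def traceF4 (h : ℕ) (u : F) : F := ∑ i ∈ Finset.range h, u ^ 4 ^ i

theorem ncard_pow_four_eq_self_le : {z : F | z ^ 4 = z}.ncard ≤ 4 := by
  classical
  open Polynomial in
  calc {z : F | z ^ 4 = z}.ncard
      ≤ (((X ^ 4 - X : F[X]).roots.toFinset : Finset F) : Set F).ncard := by
        refine ncard_le_ncard (fun z hz => ?_) (Finset.finite_toSet _)
        simp [FiniteField.X_pow_card_sub_X_ne_zero F (by norm_num : 1 < 4), hz.out]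
    _ ≤ Multiset.card (X ^ 4 - X : F[X]).roots := by
        rw [ncard_coe_finset]; exact Multiset.toFinset_card_le _
    _ ≤ 4 := (card_roots' _).trans (FiniteField.X_pow_card_sub_X_natDegree_eq F (by norm_num)).le

theorem traceF4_mul {c : F} (h : ℕ) (hc : c ^ 4 = c) (u : F) :
    traceF4 h (c * u) = c * traceF4 h u := by
  simp only [traceF4, Finset.mul_sum, mul_pow, pow_four_pow_eq_self hc]

theorem traceF4_pow_four {h : ℕ} (hq4 : ∀ u : F, u ^ 4 ^ h = u) (u : F) :
    traceF4 h (u ^ 4) = traceF4 h u := by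
  have hshift := (Finset.sum_range_succ' (fun i => u ^ 4 ^ i) h).symm.trans
    (Finset.sum_range_succ (fun i => u ^ 4 ^ i) h)
  rw [hq4, pow_zero, pow_one] at hshift
  simp only [traceF4, ← pow_mul, ← pow_succ']
  exact add_right_cancel hshift

theorem traceF4_pow_two_pow {h j : ℕ} (hq4 : ∀ u : F, u ^ 4 ^ h = u) (hj : Even j) (u : F) :
    traceF4 h (u ^ 2 ^ j) = traceF4 h u := by
  obtain ⟨i, rfl⟩ := hj
  rw [← two_mul, pow_mul, show (2 ^ 2 : ℕ) = 4 from rfl]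
  induction i with
  | zero => simp
  | succ i ih => rw [pow_succ, pow_mul, traceF4_pow_four hq4, ih]

theorem add_notMem_of_not_iff {K : Subfield F} {x y : F} (h : ¬(x ∈ K ↔ y ∈ K)) : x + y ∉ K :=
  fun hxy => h ⟨fun hx => (add_mem_cancel_left hx).1 hxy, fun hy => (add_mem_cancel_right hy).1 hxy⟩

theorem mem_iff_mem_of_gold_add_gold_mem {k : ℕ} {K : Subfield F}
    (hKpow : ∀ x : F, x ^ (2 ^ k + 1) ∈ K → x ∈ K) {x y : F}
    (h : x ^ (2 ^ k + 1) + y ^ (2 ^ k + 1) ∈ K) : x ∈ K ↔ y ∈ K :=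
  ⟨fun hx => hKpow y ((add_mem_cancel_left (K.pow_mem hx _)).1 h),
    fun hy => hKpow x ((add_mem_cancel_right (K.pow_mem hy _)).1 h)⟩

def goldPairs (k : ℕ) (a e w : F) : Set (F × F) :=
  {p | goldForm k a (p.1 + p.2) = e ∧ p.1 ^ (2 ^ k + 1) + p.2 ^ (2 ^ k + 1) = w}

def goldPiece (k : ℕ) (K : Subfield F) (a e w : F) (T : Set F) : Set (F × F) :=
  {p | p ∈ goldPairs k a e w ∧ p.1 + p.2 ∉ K ∧ p.1 ∈ T}

theorem mem_goldPiece_or_swap {k : ℕ} {K : Subfield F} {a e w x y : F} {T : Set F}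
    (hL : goldForm k a (x + y) = e) (hw : x ^ (2 ^ k + 1) + y ^ (2 ^ k + 1) = w) (hK : x + y ∉ K)
    (hT : x ∈ T ∨ y ∈ T) :
    (x, y) ∈ goldPiece k K a e w T ∪ Prod.swap ⁻¹' goldPiece k K a e w T := by
  rcases hT with hx | hy
  · exact Or.inl ⟨⟨hL, hw⟩, hK, hx⟩
  · rw [add_comm] at hL hw hK
    exact Or.inr ⟨⟨hL, hw⟩, hK, hy⟩

end Field

section CharTwo

variable {F : Type*} [Field F] [CharP F 2] {k : ℕ}

theorem goldForm_add_right (k : ℕ) (v x y : F) :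
    goldForm k v (x + y) = goldForm k v x + goldForm k v y := by
  simp only [goldForm, add_pow_char_pow]
  ring

theorem add_pow_gold (k : ℕ) (x v : F) :
    (x + v) ^ (2 ^ k + 1) = x ^ (2 ^ k + 1) + goldForm k v x + v ^ (2 ^ k + 1) := by
  rw [pow_succ, add_pow_char_pow, goldForm]
  ring

theorem gold_add_gold_add (k : ℕ) (x v : F) :
    x ^ (2 ^ k + 1) + (x + v) ^ (2 ^ k + 1) = goldForm k v x + v ^ (2 ^ k + 1) := by
  rw [add_pow_gold, ← add_assoc, ← add_assoc, CharTwo.add_self_eq_zero, zero_add]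

theorem add_pow_gold_add_add_pow_gold (k : ℕ) (x y a : F) :
    (x + a) ^ (2 ^ k + 1) + (y + a) ^ (2 ^ k + 1) =
      x ^ (2 ^ k + 1) + y ^ (2 ^ k + 1) + goldForm k a (x + y) := by
  rw [add_pow_gold, add_pow_gold, goldForm_add_right]
  linear_combination a ^ (2 ^ k + 1) * CharTwo.two_eq_zero (R := F)

theorem exists_pow_four_eq_self_of_goldForm_eq_zero
    (hF4 : ∀ z : F, z ^ 2 ^ k = z → z ^ 4 = z) {v x : F} (hv : v ≠ 0)
    (h : goldForm k v x = 0) : ∃ c : F, c ^ 4 = c ∧ x = c * v := by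
  refine ⟨x / v, hF4 _ ?_, (div_mul_cancel₀ x hv).symm⟩
  rw [goldForm, CharTwo.add_eq_zero] at h
  rw [div_pow, div_eq_div_iff (pow_ne_zero _ hv) hv]
  linear_combination -h

theorem ncard_goldForm_eq_le [Finite F] (hF4 : ∀ z : F, z ^ 2 ^ k = z → z ^ 4 = z) {v : F}
    (hv : v ≠ 0) (u : F) : {x | goldForm k v x = u}.ncard ≤ 4 := by
  rcases eq_empty_or_nonempty {x | goldForm k v x = u} with h | ⟨x₀, hx₀⟩
  · simp [h]
  have hmaps : ∀ x ∈ {x | goldForm k v x = u}, (x + x₀) / v ∈ {z : F | z ^ 4 = z} := by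
    intro x hx
    obtain ⟨c, hc, hxc⟩ := exists_pow_four_eq_self_of_goldForm_eq_zero hF4 hv
      (x := x + x₀) (by rw [goldForm_add_right, hx, hx₀, CharTwo.add_self_eq_zero])
    rw [hxc, mul_div_cancel_right₀ c hv]
    exact hc
  refine (ncard_le_ncard_of_injOn _ hmaps fun x _ y _ hxy => ?_).trans ncard_pow_four_eq_self_le
  simpa [hv] using hxy

theorem traceF4_add (h : ℕ) (u w : F) : traceF4 h (u + w) = traceF4 h u + traceF4 h w := by
  have h4 : ∀ i, (4 : ℕ) ^ i = 2 ^ (2 * i) := fun i => by rw [pow_mul]; norm_num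
  simp only [traceF4, ← Finset.sum_add_distrib, h4, add_pow_char_pow]

theorem traceF4_one {h : ℕ} (hh : Odd h) : traceF4 h (1 : F) = 1 := by
  simp [traceF4, CharTwo.natCast_eq_ite, Nat.not_even_iff_odd.2 hh]

theorem traceF4_gold_add_gold {h : ℕ} (hq4 : ∀ u : F, u ^ 4 ^ h = u) (hh : Odd h) (hk : Even k)
    {c : F} (hc : c ^ 4 = c) (t : F) :
    traceF4 h (t ^ (2 ^ k + 1) + (t + c) ^ (2 ^ k + 1)) = c ^ 2 := by
  have hck : c ^ 2 ^ k = c := pow_two_pow_eq_self_of_pow_four_eq_self hc hk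
  have hc2 : (c ^ 2) ^ 4 = c ^ 2 := by rw [← pow_mul, mul_comm, pow_mul, hc]
  rw [gold_add_gold_add, goldForm, pow_succ, hck,
    show c * t + c * t ^ 2 ^ k + c * c = c * (t + t ^ 2 ^ k) + c ^ 2 * 1 by ring, traceF4_add,
    traceF4_mul h hc, traceF4_mul h hc2, traceF4_add, traceF4_pow_two_pow hq4 hk, traceF4_one hh,
    CharTwo.add_self_eq_zero, mul_zero, zero_add, mul_one]

theorem gold_injective {n : ℕ} (hq : ∀ z : F, z ^ 2 ^ n = z) (hk2 : Nat.gcd (2 * k) n = 2)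
    (hk : Even k) : Function.Injective fun x : F => x ^ (2 ^ k + 1) := by
  intro x y hxy
  dsimp only at hxy
  rcases eq_or_ne y 0 with rfl | hy
  · simpa using hxy
  have hz : (x / y) ^ (2 ^ k + 1) = 1 := by rw [div_pow, hxy, div_self (pow_ne_zero _ hy)]
  have hzk : (x / y) ^ 2 ^ k = (x / y)⁻¹ := eq_inv_of_mul_eq_one_left (by rw [← pow_succ, hz])
  have h2k : (x / y) ^ 2 ^ (2 * k) = x / y := by
    rw [two_mul, pow_add, pow_mul, hzk, inv_pow, hzk, inv_inv]
  have h4 : (x / y) ^ 4 = x / y := by simpa [hk2] using pow_pow_gcd_eq_self two_pos h2k (hq _)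
  have hsq : (x / y) ^ 2 = 1 ^ 2 := by
    rw [one_pow, ← hz, pow_succ _ (2 ^ k), pow_two_pow_eq_self_of_pow_four_eq_self h4 hk, sq]
  exact (div_eq_one_iff_eq hy).1 (CharTwo.sq_inj.1 hsq)

theorem eq_of_goldForm_eq_zero {h : ℕ} (hF4 : ∀ z : F, z ^ 2 ^ k = z → z ^ 4 = z) (hk : Even k)
    (hh : Odd h) (hq4 : ∀ u : F, u ^ 4 ^ h = u) {a v v' x x' : F} (ha : a ≠ 0)
    (hv : goldForm k a v = 0) (hv' : goldForm k a v' = 0)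
    (hw : x ^ (2 ^ k + 1) + (x + v) ^ (2 ^ k + 1) = x' ^ (2 ^ k + 1) + (x' + v') ^ (2 ^ k + 1)) :
    v = v' := by
  have key : ∀ {x v : F}, goldForm k a v = 0 → ∃ c : F, v = c * a ∧
      traceF4 h ((x ^ (2 ^ k + 1) + (x + v) ^ (2 ^ k + 1)) / a ^ (2 ^ k + 1)) = c ^ 2 := by
    intro x v hv
    obtain ⟨c, hc, rfl⟩ := exists_pow_four_eq_self_of_goldForm_eq_zero hF4 ha hv
    refine ⟨c, rfl, ?_⟩
    have hscale : x ^ (2 ^ k + 1) + (x + c * a) ^ (2 ^ k + 1) =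
        a ^ (2 ^ k + 1) * ((x / a) ^ (2 ^ k + 1) + (x / a + c) ^ (2 ^ k + 1)) := by
      rw [mul_add, ← mul_pow, ← mul_pow, mul_add, mul_div_cancel₀ _ ha, mul_comm a c]
    rw [hscale, mul_div_cancel_left₀ _ (pow_ne_zero _ ha), traceF4_gold_add_gold hq4 hh hk hc]
  obtain ⟨c, rfl, hc⟩ := key (x := x) hv
  obtain ⟨c', rfl, hc'⟩ := key (x := x') hv'
  rw [hw, hc'] at hc
  rw [CharTwo.sq_inj.1 hc]

theorem eq_of_add_mem {K : Subfield F} (hK4 : ∀ c : F, c ^ 4 = c → c ∈ K)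
    (hF4 : ∀ z : F, z ^ 2 ^ k = z → z ^ 4 = z) {p q : F × F} (hv : p.1 + p.2 = q.1 + q.2)
    (hvK : p.1 + p.2 ∉ K)
    (hw : p.1 ^ (2 ^ k + 1) + p.2 ^ (2 ^ k + 1) = q.1 ^ (2 ^ k + 1) + q.2 ^ (2 ^ k + 1))
    (hpq : p.1 + q.1 ∈ K) : p = q := by
  have hp2 : p.2 = p.1 + (p.1 + p.2) := (CharTwo.add_cancel_left _ _).symm
  have hq2 : q.2 = q.1 + (p.1 + p.2) := by rw [hv]; exact (CharTwo.add_cancel_left _ _).symm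
  have hv0 : p.1 + p.2 ≠ 0 := fun h0 => hvK (h0 ▸ K.zero_mem)
  rw [hp2, hq2, gold_add_gold_add, gold_add_gold_add, add_left_inj] at hw
  obtain ⟨c, hc, hcv⟩ := exists_pow_four_eq_self_of_goldForm_eq_zero hF4 hv0 (x := p.1 + q.1)
    (by rw [goldForm_add_right, hw, CharTwo.add_self_eq_zero])
  obtain rfl : c = 0 := by
    by_contra hc0
    refine hvK ?_
    rw [← inv_mul_cancel_left₀ hc0 (p.1 + p.2), ← hcv]
    exact K.mul_mem (K.inv_mem (hK4 c hc)) hpq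
  have h1 : p.1 = q.1 := CharTwo.add_eq_zero.1 (by simpa using hcv)
  exact Prod.ext h1 (by rw [hp2, hq2, h1])

theorem add_eq_add_of_mem_goldPairs_zero {h : ℕ} (hF4 : ∀ z : F, z ^ 2 ^ k = z → z ^ 4 = z)
    (hk : Even k) (hh : Odd h) (hq4 : ∀ u : F, u ^ 4 ^ h = u) {a w : F} (ha : a ≠ 0)
    {p q : F × F} (hp : p ∈ goldPairs k a 0 w) (hq : q ∈ goldPairs k a 0 w) :
    p.1 + p.2 = q.1 + q.2 := by
  refine eq_of_goldForm_eq_zero hF4 hk hh hq4 ha (x := p.1) (x' := q.1) hp.1 hq.1 ?_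
  rw [CharTwo.add_cancel_left, CharTwo.add_cancel_left, hp.2, hq.2]

theorem ncard_goldPairs_zero_le [Finite F] {h : ℕ} (hF4 : ∀ z : F, z ^ 2 ^ k = z → z ^ 4 = z)
    (hk : Even k) (hh : Odd h) (hq4 : ∀ u : F, u ^ 4 ^ h = u) {a w : F} (ha : a ≠ 0)
    (hw : w ≠ 0) : (goldPairs k a 0 w).ncard ≤ 4 := by
  rcases eq_empty_or_nonempty (goldPairs k a 0 w) with hempty | ⟨p₀, hp₀⟩
  · simp [hempty]
  have hsnd : ∀ p ∈ goldPairs k a 0 w, p.2 = p.1 + (p₀.1 + p₀.2) := fun p hp => by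
    rw [← add_eq_add_of_mem_goldPairs_zero hF4 hk hh hq4 ha hp hp₀, CharTwo.add_cancel_left]
  have hv0 : p₀.1 + p₀.2 ≠ 0 := fun h0 => hw <| by
    rw [← hp₀.2, CharTwo.add_eq_zero.1 h0, CharTwo.add_self_eq_zero]
  have hmaps : ∀ p ∈ goldPairs k a 0 w,
      p.1 ∈ {x | goldForm k (p₀.1 + p₀.2) x = w + (p₀.1 + p₀.2) ^ (2 ^ k + 1)} := by
    intro p hp
    have := hp.2
    rw [hsnd p hp, gold_add_gold_add] at this
    exact CharTwo.add_eq_iff_eq_add.1 this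
  exact (ncard_le_ncard_of_injOn Prod.fst hmaps fun p hp q hq h1 =>
    Prod.ext h1 (by rw [hsnd p hp, hsnd q hq, h1])).trans (ncard_goldForm_eq_le hF4 hv0 _)

theorem ncard_goldPiece_zero_le {h : ℕ} {K : Subfield F} (hK4 : ∀ c : F, c ^ 4 = c → c ∈ K)
    (hF4 : ∀ z : F, z ^ 2 ^ k = z → z ^ 4 = z) (hk : Even k) (hh : Odd h)
    (hq4 : ∀ u : F, u ^ 4 ^ h = u) {a w : F} (ha : a ≠ 0) {T : Set F}
    (hT : ∀ x ∈ T, ∀ y ∈ T, x + y ∈ K) : (goldPiece k K a 0 w T).ncard ≤ 1 := by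
  have hsub : (goldPiece k K a 0 w T).Subsingleton := by
    rintro p ⟨hp, hpK, hpT⟩ q ⟨hq, -, hqT⟩
    exact eq_of_add_mem hK4 hF4 (add_eq_add_of_mem_goldPairs_zero hF4 hk hh hq4 ha hp hq) hpK
      (hp.2.trans hq.2.symm) (hT _ hpT _ hqT)
  exact (ncard_le_one hsub.finite).2 fun _ hp _ hq => hsub hp hq

theorem ncard_goldPiece_one_le [Finite F] {K : Subfield F} (hK4 : ∀ c : F, c ^ 4 = c → c ∈ K)
    (hF4 : ∀ z : F, z ^ 2 ^ k = z → z ^ 4 = z) {a w : F} (ha : a ≠ 0) {T : Set F}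
    (hT : ∀ x ∈ T, ∀ y ∈ T, x + y ∈ K) : (goldPiece k K a 1 w T).ncard ≤ 4 :=
  (ncard_le_ncard_of_injOn (fun p => p.1 + p.2) (fun _ hp => hp.1.1)
    fun _ hp _ hq hv => eq_of_add_mem hK4 hF4 hv hp.2.1 (hp.1.2.trans hq.1.2.symm)
      (hT _ hp.2.2 _ hq.2.2)).trans (ncard_goldForm_eq_le hF4 ha 1)

section Boomerang

variable {K : Subfield F} [DecidablePred (· ∈ K)] {f : F → F}

theorem ite_mem_add_ite_mem (x y : F) :
    ((if x ∈ K then 1 else 0) + if y ∈ K then 1 else 0 : F) =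
      if (x ∈ K ↔ y ∈ K) then 0 else 1 := by
  by_cases hx : x ∈ K <;> by_cases hy : y ∈ K <;> simp [hx, hy, CharTwo.add_self_eq_zero]

theorem gold_add_gold_eq_of_add_eq (hf : ∀ x, f x = x ^ (2 ^ k + 1) + if x ∈ K then 1 else 0)
    {x y b : F} (h : f x + f y = b) :
    x ^ (2 ^ k + 1) + y ^ (2 ^ k + 1) = b + if (x ∈ K ↔ y ∈ K) then 0 else 1 := by
  rw [hf, hf, add_add_add_comm, ite_mem_add_ite_mem] at h
  rw [← h, add_assoc, CharTwo.add_self_eq_zero, add_zero]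

theorem goldForm_eq_of_boomerang (hf : ∀ x, f x = x ^ (2 ^ k + 1) + if x ∈ K then 1 else 0)
    {a b x y : F} (h₁ : f x + f y = b) (h₂ : f (x + a) + f (y + a) = b) :
    goldForm k a (x + y) =
      (if (x ∈ K ↔ y ∈ K) then 0 else 1) + if (x + a ∈ K ↔ y + a ∈ K) then 0 else 1 := by
  have e₂ := gold_add_gold_eq_of_add_eq hf h₂
  rw [add_pow_gold_add_add_pow_gold, gold_add_gold_eq_of_add_eq hf h₁] at e₂
  linear_combination e₂ - (if (x ∈ K ↔ y ∈ K) then (0 : F) else 1) * CharTwo.two_eq_zero (R := F)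

theorem boomerang_subset_goldPairs (hf : ∀ x, f x = x ^ (2 ^ k + 1) + if x ∈ K then 1 else 0)
    (hK4 : ∀ c : F, c ^ 4 = c → c ∈ K) (hKpow : ∀ x : F, x ^ (2 ^ k + 1) ∈ K → x ∈ K)
    (hF4 : ∀ z : F, z ^ 2 ^ k = z → z ^ 4 = z) {a b : F} (ha : a ≠ 0) (hab : a ∈ K ∨ b ∈ K) :
    {p : F × F | f p.1 + f p.2 = b ∧ f (p.1 + a) + f (p.2 + a) = b} ⊆ goldPairs k a 0 b := by
  rintro ⟨x, y⟩ ⟨h₁, h₂⟩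
  have hL := goldForm_eq_of_boomerang hf h₁ h₂
  suffices hσ : (x ∈ K ↔ y ∈ K) ∧ (x + a ∈ K ↔ y + a ∈ K) by
    refine ⟨?_, ?_⟩
    · rw [hL, if_pos hσ.1, if_pos hσ.2, add_zero]
    · rw [gold_add_gold_eq_of_add_eq hf h₁, if_pos hσ.1, add_zero]
  rcases hab with haK | hbK
  · have hσa : (x + a ∈ K ↔ y + a ∈ K) ↔ (x ∈ K ↔ y ∈ K) := by
      rw [add_mem_cancel_right haK, add_mem_cancel_right haK]
    rw [hσa, and_self]
    by_contra hσ
    rw [if_neg hσ, if_neg (hσa.not.2 hσ), CharTwo.add_self_eq_zero] at hL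
    obtain ⟨c, hc, hv⟩ := exists_pow_four_eq_self_of_goldForm_eq_zero hF4 ha hL
    exact add_notMem_of_not_iff hσ (hv ▸ K.mul_mem (hK4 c hc) haK)
  · have hσ : ∀ {x y : F}, f x + f y = b → (x ∈ K ↔ y ∈ K) := fun h => by
      by_contra hσ
      refine hσ (mem_iff_mem_of_gold_add_gold_mem hKpow ?_)
      rw [gold_add_gold_eq_of_add_eq hf h, if_neg hσ]
      exact K.add_mem hbK K.one_mem
    exact ⟨hσ h₁, hσ h₂⟩

theorem boomerang_subset_union (hf : ∀ x, f x = x ^ (2 ^ k + 1) + if x ∈ K then 1 else 0)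
    (a b : F) :
    {p : F × F | f p.1 + f p.2 = b ∧ f (p.1 + a) + f (p.2 + a) = b} ⊆
      goldPairs k a 0 b ∪
        (goldPiece k K a 0 (b + 1) K ∪ Prod.swap ⁻¹' goldPiece k K a 0 (b + 1) K) ∪
        (goldPiece k K a 1 b ((· + a) ⁻¹' K) ∪
          Prod.swap ⁻¹' goldPiece k K a 1 b ((· + a) ⁻¹' K)) ∪
        (goldPiece k K a 1 (b + 1) K ∪ Prod.swap ⁻¹' goldPiece k K a 1 (b + 1) K) := by
  rintro ⟨x, y⟩ ⟨h₁, h₂⟩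
  have hw := gold_add_gold_eq_of_add_eq hf h₁
  have hL := goldForm_eq_of_boomerang hf h₁ h₂
  have hT : ∀ {x y : F} {T : Set F}, ¬(x ∈ T ↔ y ∈ T) → x ∈ T ∨ y ∈ T := by tauto
  have hKa : x + a + (y + a) = x + y := by
    linear_combination a * CharTwo.two_eq_zero (R := F)
  split_ifs at hw hL with hσ hσ' hσ' <;>
    simp only [add_zero, zero_add, CharTwo.add_self_eq_zero] at hw hL
  · exact Or.inl <| Or.inl <| Or.inl ⟨hL, hw⟩
  · exact Or.inl <| Or.inr <|
      mem_goldPiece_or_swap hL hw (hKa ▸ add_notMem_of_not_iff hσ') (hT hσ')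
  · exact Or.inr <| mem_goldPiece_or_swap hL hw (add_notMem_of_not_iff hσ) (hT hσ)
  · exact Or.inl <| Or.inl <| Or.inr <|
      mem_goldPiece_or_swap hL hw (add_notMem_of_not_iff hσ) (hT hσ)

variable [Finite F] {a b : F}

theorem ncard_boomerang_le_four (hf : ∀ x, f x = x ^ (2 ^ k + 1) + if x ∈ K then 1 else 0)
    {h : ℕ} (hF4 : ∀ z : F, z ^ 2 ^ k = z → z ^ 4 = z) (hk : Even k) (hh : Odd h)
    (hq4 : ∀ u : F, u ^ 4 ^ h = u) (hK4 : ∀ c : F, c ^ 4 = c → c ∈ K)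
    (hKpow : ∀ x : F, x ^ (2 ^ k + 1) ∈ K → x ∈ K) (ha : a ≠ 0) (hb : b ≠ 0)
    (hab : a ∈ K ∨ b ∈ K) :
    {p : F × F | f p.1 + f p.2 = b ∧ f (p.1 + a) + f (p.2 + a) = b}.ncard ≤ 4 :=
  (ncard_le_ncard (boomerang_subset_goldPairs hf hK4 hKpow hF4 ha hab)).trans
    (ncard_goldPairs_zero_le hF4 hk hh hq4 ha hb)

theorem ncard_boomerang_le_twenty_two
    (hf : ∀ x, f x = x ^ (2 ^ k + 1) + if x ∈ K then 1 else 0)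
    {h : ℕ} (hF4 : ∀ z : F, z ^ 2 ^ k = z → z ^ 4 = z) (hk : Even k) (hh : Odd h)
    (hq4 : ∀ u : F, u ^ 4 ^ h = u) (hK4 : ∀ c : F, c ^ 4 = c → c ∈ K) (ha : a ≠ 0)
    (hb : b ≠ 0) :
    {p : F × F | f p.1 + f p.2 = b ∧ f (p.1 + a) + f (p.2 + a) = b}.ncard ≤ 22 := by
  have hK : ∀ x ∈ (K : Set F), ∀ y ∈ (K : Set F), x + y ∈ K := fun x hx y hy => K.add_mem hx hy
  have hKa : ∀ x ∈ (· + a) ⁻¹' (K : Set F), ∀ y ∈ (· + a) ⁻¹' (K : Set F), x + y ∈ K :=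
    fun x hx y hy => by
      have := K.add_mem hx hy
      rwa [add_add_add_comm, CharTwo.add_self_eq_zero, add_zero] at this
  have h₀ := ncard_goldPairs_zero_le hF4 hk hh hq4 ha hb
  have h₁ := ncard_goldPiece_zero_le (w := b + 1) hK4 hF4 hk hh hq4 ha hK
  have h₂ := ncard_goldPiece_one_le (w := b) hK4 hF4 ha hKa
  have h₃ := ncard_goldPiece_one_le (w := b + 1) hK4 hF4 ha hK
  refine (ncard_le_ncard (boomerang_subset_union hf a b)).trans ?_
  grw [ncard_union_le, ncard_union_le, ncard_union_le, ncard_union_preimage_swap_le,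
    ncard_union_preimage_swap_le, ncard_union_preimage_swap_le, h₀, h₁, h₂, h₃]

end Boomerang

end CharTwo

theorem beta_eq_ncard {F : Type*} [Field F] (f : F → F) (a b : F) :
    beta f a b = {p : F × F | f p.1 + f p.2 = b ∧ f (p.1 + a) + f (p.2 + a) = b}.ncard :=
  Nat.card_coe_set_eq _

end GoldBoomerang

open GoldBoomerang in
/-- Let `n = s·m` with `s` even, `s/2` odd, `m` odd, and `gcd(k,n) = 2`.
Let `F = F_{2^n}`, `S = F_{2^s}`, and let `Fn` equal `x^(2^k+1) + 1` on `S` and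
`x^(2^k+1)` off `S`. Then for all nonzero `a, b`: `β_F(a,b) ≤ 4` if `a ∈ S \ {0}` or
`b ∈ S \ {0}`, and `β_F(a,b) ≤ 22` if `a, b ∉ S`. -/
theorem stmt13 {F : Type*} [Field F] [Fintype F] (n s m k : ℕ)
    (hn : n = s * m) (hs : Even s) (hs2 : Odd (s / 2)) (hm : Odd m)
    (hk : Nat.gcd k n = 2) (hcard : Fintype.card F = 2 ^ n)
    (S : Set F) (hS : S = {x : F | x ^ (2 ^ s) = x})
    (Fn : F → F)
    (hFn1 : ∀ x ∈ S, Fn x = x ^ (2 ^ k + 1) + 1)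
    (hFn2 : ∀ x ∉ S, Fn x = x ^ (2 ^ k + 1)) :
    ∀ a b : F, a ≠ 0 → b ≠ 0 →
      ((a ∈ S ∨ b ∈ S) → beta Fn a b ≤ 4) ∧
      (a ∉ S → b ∉ S → beta Fn a b ≤ 22) := by
  have : CharP F 2 := charP_of_card_eq_prime_pow hcard
  have hq : ∀ z : F, z ^ 2 ^ n = z := fun z => hcard ▸ FiniteField.pow_card z
  have hh : Odd (n / 2) := hn ▸ odd_mul_div_two hs hs2 hm
  have hq4 : ∀ z : F, z ^ 4 ^ (n / 2) = z := fun z => by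
    rw [show (4 : ℕ) = 2 ^ 2 by rfl, ← pow_mul, Nat.mul_div_cancel' (hk ▸ Nat.gcd_dvd_right k n),
      hq]
  have hF4 : ∀ z : F, z ^ 2 ^ k = z → z ^ 4 = z := fun z hz => by
    simpa [hk] using pow_pow_gcd_eq_self two_pos hz (hq z)
  have hkeven : Even k := even_iff_two_dvd.2 (hk ▸ Nat.gcd_dvd_left k n)
  obtain ⟨K, rfl⟩ : ∃ K : Subfield F, (K : Set F) = S :=
    ⟨(iterateFrobenius F 2 s).eqLocusField (RingHom.id F), hS ▸ rfl⟩
  have hK4 : ∀ c : F, c ^ 4 = c → c ∈ K := fun c hc => by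
    rw [← SetLike.mem_coe, hS]
    exact pow_two_pow_eq_self_of_pow_four_eq_self hc hs
  have hKpow : ∀ x : F, x ^ (2 ^ k + 1) ∈ K → x ∈ K := fun x hx => by
    rw [← SetLike.mem_coe, hS] at hx ⊢
    refine gold_injective hq (gcd_two_mul_eq_two hk hh) hkeven ?_
    simpa only [Set.mem_ofPred_eq, ← pow_mul, mul_comm] using hx
  classical
  have hf : ∀ x, Fn x = x ^ (2 ^ k + 1) + if x ∈ K then 1 else 0 := fun x => by
    by_cases hx : x ∈ K
    · rw [hFn1 x hx, if_pos hx]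
    · rw [hFn2 x hx, if_neg hx, add_zero]
  intro a b ha hb
  rw [beta_eq_ncard]
  exact ⟨fun hab => ncard_boomerang_le_four hf hF4 hkeven hh hq4 hK4 hKpow ha hb hab,
    fun _ _ => ncard_boomerang_le_twenty_two hf hF4 hkeven hh hq4 hK4 ha hb⟩
end

section
/- Let n = sm and let f, g be polynomials with coefficients in F_{2^s}, and let F be the piecewise function F(x)=f(x) for x ∈ F_{2^s} and F(x)=g(x) for x ∉ F_{2^s}. Then for all a, b ∈ F_{2^n}, |W_F(a,b)| ≤ |W^{(s)}_f(Tr^n_s(a), Tr^n_s(b))| + |W^{(s)}_g(Tr^n_s(a), Tr^n_s(b))| + |W_g(a,b)|, where Tr^n_s is the relative trace from F_{2^n} to F_{2^s} and W^{(s)} denotes the Walsh transform computed over F_{2^s}. -/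
/-- The Walsh transform of `f : F → F` at `(a, b)`, where `F` has `2^n` elements:
`W_f(a,b) = ∑_x (-1)^{Tr(a·x + b·f(x))}`, the absolute trace `Tr(z) = ∑_{i<n} z^(2^i)`
taking values in `F_2 = {0, 1} ⊆ F`. -/
noncomputable def walsh {F : Type*} [Field F] [Fintype F] [DecidableEq F]
    (n : ℕ) (f : F → F) (a b : F) : ℤ :=
  ∑ x : F, if (∑ i ∈ Finset.range n, (a * x + b * f x) ^ (2 ^ i)) = 0 then 1 else -1

/-- The Walsh transform computed over the subfield `F_{2^s} = {x | x^(2^s) = x}`: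
`W^{(s)}_f(a,b) = ∑_{x ∈ F_{2^s}} (-1)^{Tr^s_1(a·x + b·f(x))}`, where
`Tr^s_1(z) = ∑_{i<s} z^(2^i)` is the absolute trace of `F_{2^s}`. -/
noncomputable def walshOn {F : Type*} [Field F] [Fintype F] [DecidableEq F]
    (s : ℕ) (f : F → F) (a b : F) : ℤ :=
  ∑ x ∈ Finset.univ.filter (fun x : F => x ^ (2 ^ s) = x),
    if (∑ i ∈ Finset.range s, (a * x + b * f x) ^ (2 ^ i)) = 0 then 1 else -1

/-- The relative trace `Tr^n_s : F_{2^n} → F_{2^s}`, `x ↦ ∑_{i < n/s} x^(2^(i·s))`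
(here `m = n/s`). -/
noncomputable def relTrace {F : Type*} [Field F] (s m : ℕ) (x : F) : F :=
  ∑ i ∈ Finset.range m, x ^ (2 ^ (i * s))

open Finset

section Aux
variable {F : Type*} [Field F]

lemma aux_char2 [Fintype F] (n : ℕ) (hcard : Fintype.card F = 2 ^ n) : CharP F 2 := by
  have hp : (ringChar F).Prime := CharP.char_is_prime F (ringChar F)
  have hd : (ringChar F : ℕ) ∣ 2 ^ n := by
    rw [← hcard]
    exact (CharP.cast_eq_zero_iff F (ringChar F) _).mp (FiniteField.cast_card_eq_zero F)
  have h2 : ringChar F = 2 :=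
    (Nat.prime_dvd_prime_iff_eq hp Nat.prime_two).mp (hp.dvd_of_dvd_pow hd)
  rw [← h2]; exact ringChar.charP F

lemma aux_trace_decomp (hch : CharP F 2) (s m : ℕ) (w : F) :
    ∑ i ∈ range (s * m), w ^ (2 ^ i)
      = ∑ k ∈ range s, (∑ j ∈ range m, w ^ (2 ^ (j * s))) ^ (2 ^ k) := by
  haveI := hch
  haveI : ExpChar F 2 := ExpChar.prime Nat.prime_two
  have hmap : ∀ k, (∑ j ∈ range m, w ^ (2 ^ (j * s))) ^ (2 ^ k)
      = ∑ j ∈ range m, w ^ (2 ^ (j * s + k)) := by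
    intro k
    rw [← iterateFrobenius_def (R := F) 2 k, map_sum]
    refine Finset.sum_congr rfl fun j _ => ?_
    rw [iterateFrobenius_def, ← pow_mul, ← pow_add]
  simp_rw [hmap]
  rw [← Finset.sum_product']
  refine Finset.sum_nbij' (fun i => (i % s, i / s)) (fun kj => kj.2 * s + kj.1) ?_ ?_ ?_ ?_ ?_
  · intro i hi
    simp only [mem_range] at hi
    have hs : 0 < s := by
      rcases Nat.eq_zero_or_pos s with h | h
      · subst h; simp at hi
      · exact h
    simp only [mem_product, mem_range]
    exact ⟨Nat.mod_lt _ hs, Nat.div_lt_of_lt_mul hi⟩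
  · intro kj hkj
    simp only [mem_product, mem_range] at hkj
    simp only [mem_range]
    nlinarith [hkj.1, hkj.2]
  · intro i hi
    have h := Nat.div_add_mod i s
    show i / s * s + i % s = i
    rw [mul_comm]; exact h
  · intro kj hkj
    simp only [mem_product, mem_range] at hkj
    have h1 : (kj.2 * s + kj.1) % s = kj.1 := by
      rw [mul_comm, Nat.mul_add_mod, Nat.mod_eq_of_lt hkj.1]
    have h2 : (kj.2 * s + kj.1) / s = kj.2 := by
      rw [mul_comm, Nat.mul_add_div (by omega), Nat.div_eq_of_lt hkj.1, add_zero]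
    simp only [h1, h2]
  · intro i hi
    have h : i / s * s + i % s = i := by rw [mul_comm]; exact Nat.div_add_mod i s
    show w ^ 2 ^ i = w ^ 2 ^ (i / s * s + i % s)
    rw [h]

lemma aux_fixpow (s : ℕ) {z : F} (hz : z ^ (2 ^ s) = z) (j : ℕ) : z ^ (2 ^ (j * s)) = z := by
  induction j with
  | zero => simp
  | succ j ih =>
    have : (j + 1) * s = j * s + s := by ring
    rw [this, pow_add, pow_mul, ih, hz]

lemma aux_relTrace_add (hch : CharP F 2) (s m : ℕ) (u v : F) :
    relTrace s m (u + v) = relTrace s m u + relTrace s m v := by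
  haveI := hch
  unfold relTrace
  rw [← Finset.sum_add_distrib]
  exact Finset.sum_congr rfl fun i _ => by haveI : Fact (Nat.Prime 2) := ⟨Nat.prime_two⟩; exact add_pow_char_pow u v 2 (i*s)
  
lemma aux_relTrace_mul (s m : ℕ) {z : F} (hz : z ^ (2 ^ s) = z) (a : F) :
    relTrace s m (a * z) = z * relTrace s m a := by
  unfold relTrace
  rw [Finset.mul_sum]
  exact Finset.sum_congr rfl fun i _ => by rw [mul_pow, aux_fixpow s hz, mul_comm]

lemma aux_eval_mem (hch : CharP F 2) (s : ℕ) (p : Polynomial F)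
    (hp : ∀ i, (p.coeff i) ^ (2 ^ s) = p.coeff i) {x : F} (hx : x ^ (2 ^ s) = x) :
    (p.eval x) ^ (2 ^ s) = p.eval x := by
  haveI := hch
  haveI : ExpChar F 2 := ExpChar.prime Nat.prime_two
  have : (p.eval x) ^ (2 ^ s) = (iterateFrobenius F 2 s) (p.eval x) := by
    rw [iterateFrobenius_def]
  rw [this, Polynomial.eval_eq_sum_range, map_sum]
  refine Finset.sum_congr rfl fun i _ => ?_
  rw [map_mul, map_pow, iterateFrobenius_def, iterateFrobenius_def, hp, hx]

end Aux


/-- Let `n = s·m`, `F = F_{2^n}`, `S = F_{2^s}`, let `f, g` be induced by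
polynomials with coefficients in `S`, and let `Fn` be the piecewise function (`f` on `S`,
`g` off `S`). Then for all `a, b ∈ F`,
`|W_F(a,b)| ≤ |W^{(s)}_f(Tr^n_s a, Tr^n_s b)| + |W^{(s)}_g(Tr^n_s a, Tr^n_s b)| + |W_g(a,b)|`. -/
theorem stmt14 {F : Type*} [Field F] [Fintype F] [DecidableEq F] (n s m : ℕ)
    (hn : n = s * m) (hcard : Fintype.card F = 2 ^ n)
    (S : Set F) (hS : S = {x : F | x ^ (2 ^ s) = x})
    (f g : F → F) (p q : Polynomial F)
    (hp : ∀ i, p.coeff i ∈ S) (hq : ∀ i, q.coeff i ∈ S)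
    (hf : ∀ x, f x = p.eval x) (hg : ∀ x, g x = q.eval x)
    (Fn : F → F)
    (hFn1 : ∀ x ∈ S, Fn x = f x) (hFn2 : ∀ x ∉ S, Fn x = g x) :
    ∀ a b : F,
      |walsh n Fn a b| ≤
        |walshOn s f (relTrace s m a) (relTrace s m b)| +
          |walshOn s g (relTrace s m a) (relTrace s m b)| + |walsh n g a b| := by
  intro a b
  have hch : CharP F 2 := aux_char2 n hcard
  set A := relTrace s m a with hA
  set B := relTrace s m b with hB
  -- key claim
  have key : ∀ h : F → F, (∀ x : F, x ^ (2 ^ s) = x → (h x) ^ (2 ^ s) = h x) →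
      (∑ x ∈ Finset.univ.filter (fun x : F => x ^ (2 ^ s) = x),
        (if (∑ i ∈ Finset.range n, (a * x + b * h x) ^ (2 ^ i)) = 0 then (1 : ℤ) else -1))
        = walshOn s h A B := by
    intro h hh
    unfold walshOn
    refine Finset.sum_congr rfl fun x hx => ?_
    simp only [Finset.mem_filter] at hx
    have hx' := hx.2
    have hhx := hh x hx'
    have hexp : (∑ i ∈ Finset.range n, (a * x + b * h x) ^ (2 ^ i))
        = ∑ i ∈ Finset.range s, (A * x + B * h x) ^ (2 ^ i) := by
      rw [hn, aux_trace_decomp hch s m]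
      refine Finset.sum_congr rfl fun k _ => ?_
      have : relTrace s m (a * x + b * h x) = A * x + B * h x := by
        rw [aux_relTrace_add hch, aux_relTrace_mul s m hx', aux_relTrace_mul s m hhx,
          mul_comm x A, mul_comm (h x) B]
      rw [show (∑ j ∈ Finset.range m, (a * x + b * h x) ^ (2 ^ (j * s)))
          = relTrace s m (a * x + b * h x) from rfl, this]
    rw [hexp]
  have hfS : ∀ x : F, x ^ (2 ^ s) = x → (f x) ^ (2 ^ s) = f x := by
    intro x hx
    rw [hf]
    exact aux_eval_mem hch s p (fun i => by have := hp i; rwa [hS] at this) hx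
  have hgS : ∀ x : F, x ^ (2 ^ s) = x → (g x) ^ (2 ^ s) = g x := by
    intro x hx
    rw [hg]
    exact aux_eval_mem hch s q (fun i => by have := hq i; rwa [hS] at this) hx
  -- split walsh sums
  have hsplit : ∀ h : F → F, walsh n h a b =
      (∑ x ∈ Finset.univ.filter (fun x : F => x ^ (2 ^ s) = x),
        (if (∑ i ∈ Finset.range n, (a * x + b * h x) ^ (2 ^ i)) = 0 then (1 : ℤ) else -1))
      + (∑ x ∈ Finset.univ.filter (fun x : F => ¬ x ^ (2 ^ s) = x),
        (if (∑ i ∈ Finset.range n, (a * x + b * h x) ^ (2 ^ i)) = 0 then (1 : ℤ) else -1)) := by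
    intro h
    unfold walsh
    rw [Finset.sum_filter_add_sum_filter_not]
  have hmem : ∀ x : F, (x ∈ S) ↔ x ^ (2 ^ s) = x := by
    intro x; rw [hS]; rfl
  have h1 : walsh n Fn a b = walshOn s f A B + (walsh n g a b - walshOn s g A B) := by
    rw [hsplit Fn, hsplit g, ← key f hfS, ← key g hgS]
    have e1 : (∑ x ∈ Finset.univ.filter (fun x : F => x ^ (2 ^ s) = x),
        (if (∑ i ∈ Finset.range n, (a * x + b * Fn x) ^ (2 ^ i)) = 0 then (1 : ℤ) else -1))
        = (∑ x ∈ Finset.univ.filter (fun x : F => x ^ (2 ^ s) = x),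
        (if (∑ i ∈ Finset.range n, (a * x + b * f x) ^ (2 ^ i)) = 0 then (1 : ℤ) else -1)) := by
      refine Finset.sum_congr rfl fun x hx => ?_
      simp only [Finset.mem_filter] at hx
      rw [hFn1 x ((hmem x).mpr hx.2)]
    have e2 : (∑ x ∈ Finset.univ.filter (fun x : F => ¬ x ^ (2 ^ s) = x),
        (if (∑ i ∈ Finset.range n, (a * x + b * Fn x) ^ (2 ^ i)) = 0 then (1 : ℤ) else -1))
        = (∑ x ∈ Finset.univ.filter (fun x : F => ¬ x ^ (2 ^ s) = x),
        (if (∑ i ∈ Finset.range n, (a * x + b * g x) ^ (2 ^ i)) = 0 then (1 : ℤ) else -1)) := by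
      refine Finset.sum_congr rfl fun x hx => ?_
      simp only [Finset.mem_filter] at hx
      rw [hFn2 x (fun hxS => hx.2 ((hmem x).mp hxS))]
    rw [e1, e2]
    ring
  rw [h1]
  calc |walshOn s f A B + (walsh n g a b - walshOn s g A B)|
      ≤ |walshOn s f A B| + |walsh n g a b - walshOn s g A B| := abs_add_le _ _
    _ ≤ |walshOn s f A B| + (|walsh n g a b| + |walshOn s g A B|) := by
        gcongr
        exact abs_sub _ _
    _ = |walshOn s f A B| + |walshOn s g A B| + |walsh n g a b| := by ring
end

section
/- Let n = sm and let g be a polynomial with coefficients in F_{2^s} that permutes F_{2^n} and satisfies (H3). Then for every a ∈ F_{2^n} \ F_{2^s} and every b ∈ F_{2^n}, the set {x ∈ a + F_{2^s} : g(x) ∈ b + F_{2^s}} has at most one element. -/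
/-- Let `n = s·m`, `F = F_{2^n}`, `S = F_{2^s}`, and let `g` be induced by
a polynomial with coefficients in `S`, permuting `F` and satisfying (H3): for `a ∈ S \ {0}`
and `b ∈ S`, the equation `g(x) + g(x+a) = b` has no solution outside `S`. Then for every
`a ∉ S` and every `b`, the set `{x ∈ a + S : g x ∈ b + S}` has at most one element. -/
theorem stmt15 {F : Type*} [Field F] [Fintype F] (n s m : ℕ)
    (hn : n = s * m) (hcard : Fintype.card F = 2 ^ n)
    (S : Set F) (hS : S = {x : F | x ^ (2 ^ s) = x})
    (g : F → F) (q : Polynomial F) (hq : ∀ i, q.coeff i ∈ S)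
    (hg : ∀ x, g x = q.eval x)
    (hgperm : Function.Bijective g)
    (hH3 : ∀ a ∈ S, a ≠ 0 → ∀ b ∈ S, ∀ x, x ∉ S → g x + g (x + a) ≠ b) :
    ∀ a ∉ S, ∀ b : F,
      Set.Subsingleton {x : F | x - a ∈ S ∧ g x - b ∈ S} := by
  -- characteristic 2
  obtain ⟨p, hp⟩ := CharP.exists F
  haveI := hp
  haveI hpf : Fact p.Prime := ⟨CharP.char_is_prime F p⟩
  obtain ⟨k, hk⟩ := FiniteField.card F p
  have hp2 : p = 2 := by
    have hdvd : p ∣ 2 ^ n := by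
      rw [← hcard, hk.2]
      exact dvd_pow_self p k.ne_zero
    have := hpf.out.prime.dvd_of_dvd_pow hdvd
    exact (Nat.prime_dvd_prime_iff_eq hpf.out Nat.prime_two).mp this
  subst hp2
  haveI : CharP F 2 := hp
  haveI : ExpChar F 2 := ExpChar.prime Nat.prime_two
  have h2 : (2 : F) = 0 := CharTwo.two_eq_zero
  -- S is closed under addition
  have hSadd : ∀ u v : F, u ∈ S → v ∈ S → u + v ∈ S := by
    intro u v hu hv
    rw [hS] at hu hv ⊢
    simp only [Set.mem_setOf_eq] at hu hv ⊢
    rw [add_pow_char_pow, hu, hv]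
  intro a ha b x hx y hy
  obtain ⟨hxa, hxb⟩ := hx
  obtain ⟨hya, hyb⟩ := hy
  by_contra hne
  have hd : x + y ∈ S := by
    have h := hSadd _ _ hxa hya
    have : (x - a) + (y - a) = x + y := by linear_combination (-a) * h2
    rwa [this] at h
  have hdne : x + y ≠ 0 := by
    rw [← CharTwo.sub_eq_add]
    exact sub_ne_zero.mpr hne
  have hgS : g x + g y ∈ S := by
    have h := hSadd _ _ hxb hyb
    have : (g x - b) + (g y - b) = g x + g y := by linear_combination (-b) * h2
    rwa [this] at h
  have hxnotS : x ∉ S := by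
    intro hxS
    apply ha
    have h := hSadd _ _ hxS hxa
    have : x + (x - a) = a := by linear_combination (x - a) * h2
    rwa [this] at h
  have := hH3 (x + y) hd hdne (g x + g y) hgS x hxnotS
  apply this
  have : x + (x + y) = y := by linear_combination x * h2
  rw [this]
end

section
/- Let n = sm, let f be a permutation of F_{2^s}, and let g be a polynomial with coefficients in F_{2^s} that permutes F_{2^n}. Then the piecewise function F defined by F(x)=f(x) for x ∈ F_{2^s} and F(x)=g(x) for x ∉ F_{2^s} is a permutation of F_{2^n}. -/
/-- Let `n = s·m`, `F = F_{2^n}` and `S = F_{2^s}`. If `f` is a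
permutation of `S` and `g`, induced by a polynomial with coefficients in `S`, permutes `F`,
then the piecewise function `Fn` (equal to `f` on `S` and to `g` off `S`) is a permutation
of `F`. -/
theorem stmt18 {F : Type*} [Field F] [Fintype F] (n s m : ℕ)
    (hn : n = s * m) (hcard : Fintype.card F = 2 ^ n)
    (S : Set F) (hS : S = {x : F | x ^ (2 ^ s) = x})
    (f : F → F) (hfperm : Set.BijOn f S S)
    (g : F → F) (q : Polynomial F) (hq : ∀ i, q.coeff i ∈ S)
    (hg : ∀ x, g x = q.eval x) (hgperm : Function.Bijective g)
    (Fn : F → F)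
    (hFn1 : ∀ x ∈ S, Fn x = f x) (hFn2 : ∀ x ∉ S, Fn x = g x) :
    Function.Bijective Fn := by
  -- characteristic is 2
  have hchar : CharP F 2 := by
    obtain ⟨⟨k, kpos⟩, hp, h⟩ := FiniteField.card F (ringChar F)
    have h2 : ringChar F = 2 := by
      have hdvd : ringChar F ∣ 2 ^ n := by
        rw [← hcard, h]
        exact dvd_pow_self _ (by exact_mod_cast kpos.ne')
      rcases Nat.prime_two.eq_one_or_self_of_dvd (ringChar F)
        (hp.prime.dvd_of_dvd_pow hdvd) with h1 | h1
      · exact absurd h1 hp.one_lt.ne'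
      · exact h1.symm ▸ rfl
    rw [← h2]; exact ringChar.charP F
  -- S is closed under g
  have hgS : ∀ x ∈ S, g x ∈ S := by
    intro x hx
    rw [hS] at hx ⊢
    simp only [Set.mem_setOf_eq] at hx ⊢
    rw [hg]
    have : (q.eval x) ^ 2 ^ s = iterateFrobenius F 2 s (q.eval x) := rfl
    rw [this, ← Polynomial.eval₂_hom, Polynomial.eval₂_eq_eval_map]
    have hqmap : q.map (iterateFrobenius F 2 s) = q := by
      ext i
      rw [Polynomial.coeff_map]
      have := hq i
      rw [hS] at this
      exact this
    rw [hqmap]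
    have hx' : iterateFrobenius F 2 s x = x := hx
    rw [hx']
  -- g restricted to S is a bijection of S
  have hSfin : S.Finite := Set.toFinite S
  have hgSbij : Set.BijOn g S S :=
    (hSfin.injOn_iff_bijOn_of_mapsTo hgS).mp hgperm.injective.injOn
  -- hence g maps the complement into the complement
  have hgSc : ∀ x ∉ S, g x ∉ S := by
    intro x hx hgx
    obtain ⟨y, hy, hyx⟩ := hgSbij.surjOn hgx
    exact hx (hgperm.injective hyx ▸ hy)
  have hinj : Function.Injective Fn := by
    intro a b hab
    by_cases ha : a ∈ S <;> by_cases hb : b ∈ S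
    · rw [hFn1 a ha, hFn1 b hb] at hab
      exact hfperm.injOn ha hb hab
    · rw [hFn1 a ha, hFn2 b hb] at hab
      exact absurd (hab ▸ hfperm.mapsTo ha) (hgSc b hb)
    · rw [hFn2 a ha, hFn1 b hb] at hab
      exact absurd (hab ▸ hfperm.mapsTo hb) (hgSc a ha)
    · rw [hFn2 a ha, hFn2 b hb] at hab
      exact hgperm.injective hab
  exact Finite.injective_iff_bijective.mp hinj
end
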